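/- arXiv:1701.02207 — 9 statements merged into one kernel-verified Lean document; each statement's English description precedes it below -/
import Mathlib

section
/- Let p be a prime, q = p^{N} with N ≥ 2, and b ∈ ℕ with gcd(b, p(q−1)) = 1. Then for any nonnegative integers n₁,…,n_u and b₁,…,b_u with 0 < b₁ + ⋯ + b_u < p, the sum b₁p^{n₁} + ⋯ + b_u p^{n_u} is not divisible by q − 1. -/
/-!
Since `p ^ N ≡ 1` modulo `q - 1`, every exponent may be reduced modulo `N` without changing the
residue of the sum. The reduced sum is positive and at most `(∑ bᵢ) p ^ (N - 1) ≤ (p - 1) p ^ (N - 1)`,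
which is smaller than `p ^ N - 1` once `N ≥ 2`; a positive number below `q - 1` is not a multiple
of it.
-/

open Finset

namespace Nat

theorem pow_modEq_pow_mod {b : ℕ} (hb : 0 < b) (N n : ℕ) :
    b ^ n ≡ b ^ (n % N) [MOD b ^ N - 1] := by
  have hbN : b ^ N ≡ 1 [MOD b ^ N - 1] := modEq_sub (one_le_pow N b hb)
  calc b ^ n = (b ^ N) ^ (n / N) * b ^ (n % N) := by rw [← pow_mul, ← pow_add, div_add_mod]
    _ ≡ 1 ^ (n / N) * b ^ (n % N) [MOD b ^ N - 1] := (hbN.pow _).mul_right _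
    _ = b ^ (n % N) := by rw [one_pow, one_mul]

theorem sum_mul_pow_modEq_sum_mul_pow_mod {ι : Type*} {b : ℕ} (hb : 0 < b) (N : ℕ)
    (s : Finset ι) (c n : ι → ℕ) :
    ∑ i ∈ s, c i * b ^ n i ≡ ∑ i ∈ s, c i * b ^ (n i % N) [MOD b ^ N - 1] :=
  ModEq.sum fun i _ => (pow_modEq_pow_mod hb N (n i)).mul_left (c i)

theorem sum_mul_pow_lt_pow_sub_one {ι : Type*} {b N : ℕ} (hb : 2 ≤ b) (hN : 2 ≤ N)
    (s : Finset ι) {c e : ι → ℕ} (he : ∀ i ∈ s, e i < N) (hc : ∑ i ∈ s, c i < b) :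
    ∑ i ∈ s, c i * b ^ e i < b ^ N - 1 := by
  have htop : 2 ≤ b ^ (N - 1) := hb.trans (le_self_pow (by omega) b)
  have hle : b ^ (N - 1) ≤ b ^ N := Nat.pow_le_pow_right (by omega) (by omega)
  have hpow : b * b ^ (N - 1) = b ^ N := by rw [← pow_succ']; congr 1; omega
  calc ∑ i ∈ s, c i * b ^ e i ≤ ∑ i ∈ s, c i * b ^ (N - 1) :=
        sum_le_sum fun i hi => Nat.mul_le_mul_left _ <|
          Nat.pow_le_pow_right (by omega) (Nat.le_sub_one_of_lt (he i hi))
    _ = (∑ i ∈ s, c i) * b ^ (N - 1) := (sum_mul ..).symm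
    _ ≤ (b - 1) * b ^ (N - 1) := Nat.mul_le_mul_right _ (by omega)
    _ < b ^ N - 1 := by rw [Nat.sub_one_mul, hpow]; omega

theorem sum_le_sum_mul_pow {ι : Type*} {b : ℕ} (hb : 0 < b) (s : Finset ι) (c e : ι → ℕ) :
    ∑ i ∈ s, c i ≤ ∑ i ∈ s, c i * b ^ e i :=
  sum_le_sum fun _ _ => Nat.le_mul_of_pos_right _ (pow_pos hb _)

end Nat

theorem stmt0_general (p N q : ℕ) (hN : 2 ≤ N) (hq : q = p ^ N)
    (u : ℕ) (n c : Fin u → ℕ)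
    (hpos : 0 < ∑ i, c i) (hlt : (∑ i, c i) < p) :
    ¬ ((q - 1) ∣ ∑ i, c i * p ^ n i) := by
  intro hdvd
  subst hq
  have hp : 0 < p := by omega
  have hreduced : (p ^ N - 1) ∣ ∑ i, c i * p ^ (n i % N) :=
    Nat.modEq_zero_iff_dvd.1 <|
      (Nat.sum_mul_pow_modEq_sum_mul_pow_mod hp N _ c n).symm.trans (Nat.modEq_zero_iff_dvd.2 hdvd)
  have hsmall := Nat.sum_mul_pow_lt_pow_sub_one (by omega) hN univ
    (fun i _ => Nat.mod_lt (n i) (by omega)) hlt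
  have hzero := Nat.eq_zero_of_dvd_of_lt hreduced hsmall
  have := Nat.sum_le_sum_mul_pow hp univ c (fun i => n i % N)
  omega

/-- Let `p` be a prime, `q = p^N` with `N ≥ 2`, and `b ∈ ℕ` with `gcd(b, p(q-1)) = 1`.
Then for any nonnegative integers `n₁,…,n_u` and `b₁,…,b_u` with `0 < b₁ + ⋯ + b_u < p`,
the sum `b₁p^{n₁} + ⋯ + b_u p^{n_u}` is not divisible by `q - 1`. -/
theorem stmt0 (p N q b : ℕ) (hp : p.Prime) (hN : 2 ≤ N) (hq : q = p ^ N)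
    (hb : Nat.gcd b (p * (q - 1)) = 1)
    (u : ℕ) (n c : Fin u → ℕ)
    (hpos : 0 < ∑ i, c i) (hlt : (∑ i, c i) < p) :
    ¬ ((q - 1) ∣ ∑ i, c i * p ^ n i) :=
  stmt0_general p N q hN hq u n c hpos hlt
end

section
/- Let p be a prime, w* > 0 a real number, u a natural number, and r* > 0 a rational number of the form b₀*/(q₀*−1) where q₀* = p^{N₀*} with N₀* ≥ 2 and gcd(b₀*, p(q₀*−1)) = 1. Define A[u] as the set of rationals a₁p^{−n₁} + ⋯ + a_u p^{−n_u} with 0 = n₁ ≤ ⋯ ≤ n_u integers and each a_i an integer in [0, w*), and B[u] as the set of rationals r*(b₁p^{−m₁} + ⋯ + b_u p^{−m_u}) with 0 = m₁ ≤ ⋯ ≤ m_u integers, b_i nonnegative integers, b₁ ≠ 0, and b₁ + ⋯ + b_u < p. Then A[u] ∩ B[u] = ∅. -/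
/-- The set `A[u]` of rationals (viewed in `ℝ`): sums `a₁p^{-n₁} + ⋯ + a_u p^{-n_u}`
with `0 = n₁ ≤ ⋯ ≤ n_u` integers and each `a_i` an integer in `[0, w)`. -/
def Aset (p u : ℕ) (w : ℝ) : Set ℝ :=
  {x | ∃ (n : Fin u → ℕ) (a : Fin u → ℤ),
    Monotone n ∧ (∀ h : 0 < u, n ⟨0, h⟩ = 0) ∧
    (∀ i, 0 ≤ a i ∧ (a i : ℝ) < w) ∧
    x = ∑ i, (a i : ℝ) * (p : ℝ) ^ (-(n i : ℤ))}

/-- The set `B[u]`: sums `r(b₁p^{-m₁} + ⋯ + b_u p^{-m_u})` with `0 = m₁ ≤ ⋯ ≤ m_u`,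
`b_i` nonnegative integers, `b₁ ≠ 0`, and `b₁ + ⋯ + b_u < p`. -/
def Bset (p u : ℕ) (r : ℝ) : Set ℝ :=
  {x | ∃ (hu : 0 < u) (m b : Fin u → ℕ),
    Monotone m ∧ m ⟨0, hu⟩ = 0 ∧ b ⟨0, hu⟩ ≠ 0 ∧
    (∑ i, b i) < p ∧
    x = r * ∑ i, (b i : ℝ) * (p : ℝ) ^ (-(m i : ℤ))}

/-!
Every element of `A[u]` lies in `ℤ[1/p]`. If some `x ∈ B[u]` satisfied `x p^K ∈ ℤ`, clearing
denominators in `x = b₀ / (p^N - 1) · ∑ bᵢ p^{-mᵢ}` would give `p^N - 1 ∣ b₀ T` with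
`T = ∑ bᵢ p^{eᵢ}`, hence `p^N - 1 ∣ T` since `b₀` is coprime to `p^N - 1`. But modulo `p^N - 1`
the exponents `eᵢ` may be reduced mod `N`, and then
`0 < ∑ bᵢ p^{eᵢ mod N} ≤ (∑ bᵢ) p^{N-1} ≤ (p - 1) p^{N-1} < p^N - 1`.
-/

open Finset

-- `ℤ[1/p]` as a subset of `ℝ`
def intAdjoinInv (p : ℕ) : Set ℝ := {x | ∃ (K : ℕ) (z : ℤ), x * (p : ℝ) ^ K = z}

lemma exists_int_mul_pow_of_le {p K L : ℕ} {x : ℝ} {z : ℤ} (hx : x * (p : ℝ) ^ K = z)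
    (hKL : K ≤ L) : ∃ z' : ℤ, x * (p : ℝ) ^ L = z' :=
  ⟨z * p ^ (L - K), by push_cast; rw [← hx, mul_assoc, ← pow_add, Nat.add_sub_cancel' hKL]⟩

lemma sum_mul_zpow_neg_mul_pow {𝕜 ι : Type*} [Field 𝕜] (s : Finset ι) {a : 𝕜} (ha : a ≠ 0)
    (c : ι → 𝕜) (n : ι → ℕ) {K : ℕ} (hK : ∀ i ∈ s, n i ≤ K) :
    (∑ i ∈ s, c i * a ^ (-(n i : ℤ))) * a ^ K = ∑ i ∈ s, c i * a ^ (K - n i) := by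
  rw [sum_mul]
  refine sum_congr rfl fun i hi => ?_
  rw [zpow_neg, zpow_natCast, mul_assoc, pow_sub₀ a ha (hK i hi), mul_comm (_⁻¹)]

lemma Aset_subset_intAdjoinInv {p : ℕ} (hp : p ≠ 0) (u : ℕ) (w : ℝ) :
    Aset p u w ⊆ intAdjoinInv p := by
  rintro x ⟨n, a, -, -, -, rfl⟩
  refine ⟨univ.sup n, ∑ i, a i * (p : ℤ) ^ (univ.sup n - n i), ?_⟩
  rw [sum_mul_zpow_neg_mul_pow _ (Nat.cast_ne_zero.2 hp) _ _ fun i _ => le_sup (mem_univ i)]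
  push_cast
  rfl

lemma pow_modEq_pow_mod {a : ℕ} (ha : 0 < a) (e N : ℕ) : a ^ e ≡ a ^ (e % N) [MOD a ^ N - 1] :=
  calc a ^ e = (a ^ N) ^ (e / N) * a ^ (e % N) := by rw [← pow_mul, ← pow_add, Nat.div_add_mod]
    _ ≡ 1 ^ (e / N) * a ^ (e % N) [MOD a ^ N - 1] :=
      ((Nat.modEq_sub (Nat.one_le_pow _ _ ha)).pow _).mul_right _
    _ = a ^ (e % N) := by rw [one_pow, one_mul]

theorem not_pow_sub_one_dvd_sum_mul_pow {ι : Type*} (s : Finset ι) {a N : ℕ} (hN : 2 ≤ N)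
    (b e : ι → ℕ) (hb : ∑ i ∈ s, b i ≠ 0) (hba : ∑ i ∈ s, b i < a) :
    ¬ a ^ N - 1 ∣ ∑ i ∈ s, b i * a ^ e i := by
  have ha : 2 ≤ a := by omega
  set V := ∑ i ∈ s, b i * a ^ (e i % N)
  have hmod : ∑ i ∈ s, b i * a ^ e i ≡ V [MOD a ^ N - 1] :=
    Nat.ModEq.sum fun i _ => (pow_modEq_pow_mod (by omega) _ _).mul_left _
  have hV_pos : 0 < V := calc
    0 < ∑ i ∈ s, b i := Nat.pos_of_ne_zero hb
    _ ≤ V := sum_le_sum fun i _ => Nat.le_mul_of_pos_right _ (by positivity)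
  have hV_lt : V < a ^ N - 1 := by
    have ht : 2 ≤ a ^ (N - 1) := le_self_pow₀ (by omega) (by omega) |>.trans' ha
    have hsplit : a ^ N = a * a ^ (N - 1) := by rw [← pow_succ']; congr; omega
    calc V ≤ ∑ i ∈ s, b i * a ^ (N - 1) :=
          sum_le_sum fun i _ => Nat.mul_le_mul_left _ <|
            Nat.pow_le_pow_right (by omega) (Nat.le_sub_one_of_lt (Nat.mod_lt _ (by omega)))
      _ = (∑ i ∈ s, b i) * a ^ (N - 1) := sum_mul _ _ _ |>.symm
      _ ≤ (a - 1) * a ^ (N - 1) := Nat.mul_le_mul_right _ (by omega)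
      _ < a ^ N - 1 := by
        rw [hsplit, Nat.sub_one_mul]
        have := Nat.le_mul_of_pos_left (a ^ (N - 1)) (by omega : 0 < a)
        omega
  intro hdvd
  exact absurd (Nat.le_of_dvd hV_pos ((hmod.dvd_iff dvd_rfl).1 hdvd)) (by omega)

theorem Bset_disjoint_intAdjoinInv {p N b₀ : ℕ} (hN : 2 ≤ N) (hb₀ : Nat.Coprime b₀ (p ^ N - 1))
    (u : ℕ) : Disjoint (Bset p u (b₀ / ((p : ℝ) ^ N - 1))) (intAdjoinInv p) := by
  rw [Set.disjoint_left]
  rintro x ⟨hu, m, b, -, -, hb_ne, hbp, rfl⟩ ⟨K, z, hz⟩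
  have hb_sum : ∑ i, b i ≠ 0 := fun h => hb_ne (sum_eq_zero_iff.1 h _ (mem_univ _))
  have hq : 1 ≤ p ^ N := Nat.one_le_pow _ _ (by omega)
  have hqR : ((p ^ N - 1 : ℕ) : ℝ) = (p : ℝ) ^ N - 1 := by push_cast [Nat.cast_sub hq]; rfl
  have hq_ne : (p : ℝ) ^ N - 1 ≠ 0 := by
    rw [← hqR, Nat.cast_ne_zero]
    have : p ≤ p ^ N := Nat.le_self_pow (by omega) p
    omega
  obtain ⟨z', hz'⟩ := exists_int_mul_pow_of_le hz (Nat.le_add_right K (univ.sup m))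
  set T := ∑ i, b i * p ^ (K + univ.sup m - m i)
  have hT : (∑ i, (b i : ℝ) * (p : ℝ) ^ (-(m i : ℤ))) * (p : ℝ) ^ (K + univ.sup m) = T := by
    rw [sum_mul_zpow_neg_mul_pow _ (by norm_cast; omega) _ _
      fun i _ => (le_sup (mem_univ i)).trans (Nat.le_add_left _ K)]
    push_cast [T]
    rfl
  have hcleared : ((b₀ * T : ℕ) : ℤ) = ((p ^ N - 1 : ℕ) : ℤ) * z' := by
    have : ((b₀ * T : ℕ) : ℝ) = ((p ^ N - 1 : ℕ) : ℝ) * z' := by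
      rw [hqR, ← hz', Nat.cast_mul, ← hT]
      field_simp
    exact_mod_cast this
  have hdvd : p ^ N - 1 ∣ b₀ * T := Int.natCast_dvd_natCast.1 ⟨z', hcleared⟩
  exact not_pow_sub_one_dvd_sum_mul_pow _ hN b _ hb_sum hbp (hb₀.symm.dvd_of_dvd_mul_left hdvd)

theorem stmt1_general (p : ℕ) (w : ℝ)
    (u N₀ b₀ q₀ : ℕ) (hN₀ : 2 ≤ N₀) (hq₀ : q₀ = p ^ N₀)
    (hb₀ : Nat.gcd b₀ (p * (q₀ - 1)) = 1)
    (r : ℝ) (hr : r = (b₀ : ℝ) / ((q₀ : ℝ) - 1)) :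
    Aset p u w ∩ Bset p u r = ∅ := by
  subst hq₀ hr
  rw [Set.eq_empty_iff_forall_notMem]
  rintro x ⟨hxA, hxB⟩
  rw [Nat.cast_pow] at hxB
  have hp : p ≠ 0 := by
    rintro rfl
    obtain ⟨_, _, _, -, -, -, h, -⟩ := hxB
    exact Nat.not_lt_zero _ h
  exact Set.disjoint_left.1 (Bset_disjoint_intAdjoinInv hN₀ (Nat.coprime_mul_iff_right.1 hb₀).2 u)
    hxB (Aset_subset_intAdjoinInv hp u w hxA)

/-- `A[u] ∩ B[u] = ∅` when `r* = b₀*/(q₀*-1)`, `q₀* = p^{N₀*}`, `N₀* ≥ 2`,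
`gcd(b₀*, p(q₀*-1)) = 1`. -/
theorem stmt1 (p : ℕ) (hp : p.Prime) (w : ℝ) (hw : 0 < w)
    (u N₀ b₀ q₀ : ℕ) (hN₀ : 2 ≤ N₀) (hq₀ : q₀ = p ^ N₀)
    (hb₀ : Nat.gcd b₀ (p * (q₀ - 1)) = 1)
    (r : ℝ) (hr : r = (b₀ : ℝ) / ((q₀ : ℝ) - 1)) :
    Aset p u w ∩ Bset p u r = ∅ :=
  stmt1_general p w u N₀ b₀ q₀ hN₀ hq₀ hb₀ r hr
end

section
/- With the notation of the sets B[u] (sums r*(b₁p^{−m₁}+⋯+b_u p^{−m_u}) with 0 = m₁ ≤ ⋯ ≤ m_u, b_i ≥ 0 integers, b₁ ≠ 0, b₁+⋯+b_u < p, for a fixed positive rational r*): for any real number α not in B[u], the infimum inf{|α − β| : β ∈ B[u]} is strictly positive. -/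
/-- Auxiliary: finiteness of the bounded piece. -/
lemma finite_part (p u M : ℕ) (r : ℝ) :
    Set.Finite {x : ℝ | ∃ m b : Fin u → ℕ, (∀ i, m i ≤ M) ∧ (∀ i, b i ≤ p) ∧
      x = r * ∑ i, (b i : ℝ) * (p : ℝ) ^ (-(m i : ℤ))} := by
  have hsub : {x : ℝ | ∃ m b : Fin u → ℕ, (∀ i, m i ≤ M) ∧ (∀ i, b i ≤ p) ∧
      x = r * ∑ i, (b i : ℝ) * (p : ℝ) ^ (-(m i : ℤ))} ⊆
      (fun q : (Fin u → ℕ) × (Fin u → ℕ) =>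
        r * ∑ i, (q.2 i : ℝ) * (p : ℝ) ^ (-(q.1 i : ℤ))) ''
        ((Set.univ.pi fun _ => Set.Iic M) ×ˢ (Set.univ.pi fun _ => Set.Iic p)) := by
    rintro x ⟨m, b, hm, hb, rfl⟩
    exact ⟨(m, b), ⟨fun i _ => hm i, fun i _ => hb i⟩, rfl⟩
  exact Set.Finite.subset (Set.Finite.image _ (Set.Finite.prod
    (Set.Finite.pi fun _ => Set.finite_Iic M) (Set.Finite.pi fun _ => Set.finite_Iic p))) hsub

lemma finset_dist (s : Set ℝ) (hs : s.Finite) (α : ℝ) (hα : α ∉ s) :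
    ∃ ε > (0 : ℝ), ∀ β ∈ s, ε ≤ |α - β| := by
  rcases s.eq_empty_or_nonempty with h | h
  · exact ⟨1, one_pos, by simp [h]⟩
  · have hc : IsClosed s := hs.isClosed
    have hpos : 0 < Metric.infDist α s := (hc.notMem_iff_infDist_pos h).mp hα
    exact ⟨_, hpos, fun β hβ => by
      simpa [Real.dist_eq] using Metric.infDist_le_dist_of_mem hβ⟩

lemma Bset_mono (p u : ℕ) (r : ℝ) : Bset p u r ⊆ Bset p (u + 1) r := by
  rintro x ⟨hu, m, b, hmono, hm0, hb0, hsum, rfl⟩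
  have hu1 : u - 1 < u := Nat.sub_lt hu one_pos
  set k : Fin (u + 1) → Fin u := fun i =>
    ⟨min i.val (u - 1), lt_of_le_of_lt (min_le_right _ _) hu1⟩ with hk
  have hkc : ∀ i : Fin u, k (Fin.castSucc i) = i := by
    intro i
    apply Fin.ext
    simp only [hk, Fin.coe_castSucc]
    exact Nat.min_eq_left (Nat.le_pred_of_lt i.isLt)
  set b' : Fin (u + 1) → ℕ := fun i => if h : (i : ℕ) < u then b ⟨i, h⟩ else 0 with hb'
  have hbc : ∀ i : Fin u, b' (Fin.castSucc i) = b i := by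
    intro i; simp [hb', i.isLt]
  refine ⟨Nat.succ_pos u, m ∘ k, b', ?_, ?_, ?_, ?_, ?_⟩
  · intro i j hij
    apply hmono
    show min (i:ℕ) (u-1) ≤ min (j:ℕ) (u-1)
    exact min_le_min (Fin.le_def.mp hij) le_rfl
  · show m (k ⟨0, Nat.succ_pos u⟩) = 0
    have : k ⟨0, Nat.succ_pos u⟩ = ⟨0, hu⟩ := by
      apply Fin.ext
      show min 0 (u-1) = 0
      exact Nat.min_eq_left (Nat.zero_le _)
    rw [this, hm0]
  · have : (⟨0, Nat.succ_pos u⟩ : Fin (u+1)) = Fin.castSucc ⟨0, hu⟩ := rfl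
    rw [this, hbc]; exact hb0
  · rw [Fin.sum_univ_castSucc]
    have : b' (Fin.last u) = 0 := by simp [hb']
    rw [this]
    simpa [hbc] using hsum
  · rw [Fin.sum_univ_castSucc]
    have h1 : b' (Fin.last u) = 0 := by simp [hb']
    rw [h1]
    simp [hbc, hkc]

lemma key (p : ℕ) (hp : p.Prime) (r : ℝ) (hr : 0 < r) :
    ∀ u, ∀ α ∉ Bset p u r, ∃ ε > (0 : ℝ), ∀ β ∈ Bset p u r, ε ≤ |α - β| := by
  intro u
  induction u with
  | zero =>
    intro α _
    refine ⟨1, one_pos, fun β hβ => absurd hβ ?_⟩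
    rintro ⟨hu, -⟩
    exact absurd hu (lt_irrefl 0)
  | succ u ih =>
    intro α hα
    have hαu : α ∉ Bset p u r := fun h => hα (Bset_mono p u r h)
    obtain ⟨ε₀, hε₀, h0⟩ := ih α hαu
    have hp1 : (1 : ℝ) < p := by exact_mod_cast hp.one_lt
    have hp0 : (0 : ℝ) < p := lt_trans one_pos hp1
    obtain ⟨M, hM⟩ : ∃ M : ℕ, ((p : ℝ)⁻¹) ^ M < (ε₀ / 2) / (r * p + 1) :=
      exists_pow_lt_of_lt_one (by positivity) (inv_lt_one_of_one_lt₀ hp1)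
    -- the finite part
    set S : Set ℝ := {x : ℝ | ∃ m b : Fin (u+1) → ℕ, (∀ i, m i ≤ M) ∧ (∀ i, b i ≤ p) ∧
        x = r * ∑ i, (b i : ℝ) * (p : ℝ) ^ (-(m i : ℤ))} ∩ Bset p (u+1) r with hS
    have hSfin : S.Finite := Set.Finite.subset (finite_part p (u+1) M r) Set.inter_subset_left
    have hαS : α ∉ S := fun h => hα h.2
    obtain ⟨ε₁, hε₁, h1⟩ := finset_dist S hSfin α hαS
    refine ⟨min ε₁ (ε₀ / 2), lt_min hε₁ (half_pos hε₀), ?_⟩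
    rintro β ⟨hu, m, b, hmono, hm0, hb0, hsum, rfl⟩
    have hble : ∀ i, b i ≤ p := by
      intro i
      calc b i ≤ ∑ j, b j := Finset.single_le_sum (fun j _ => Nat.zero_le _) (Finset.mem_univ i)
        _ ≤ p := hsum.le
    by_cases hcase : m (Fin.last u) ≤ M
    · -- bounded piece
      have hmem : r * ∑ i, (b i : ℝ) * (p : ℝ) ^ (-(m i : ℤ)) ∈ S := by
        refine ⟨⟨m, b, fun i => le_trans (hmono (Fin.le_last i)) hcase, hble, rfl⟩,
          ⟨hu, m, b, hmono, hm0, hb0, hsum, rfl⟩⟩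
      exact le_trans (min_le_left _ _) (h1 _ hmem)
    · push_neg at hcase
      -- u must be positive
      have hu' : 0 < u := by
        rcases Nat.eq_zero_or_pos u with h | h
        · subst h
          have : Fin.last 0 = ⟨0, hu⟩ := rfl
          rw [this, hm0] at hcase
          exact absurd hcase (Nat.not_lt_zero M)
        · exact h
      -- truncated element
      set β' : ℝ := r * ∑ i : Fin u, (b (Fin.castSucc i) : ℝ) *
          (p : ℝ) ^ (-(m (Fin.castSucc i) : ℤ)) with hβ'
      have hβ'mem : β' ∈ Bset p u r := by
        refine ⟨hu', m ∘ Fin.castSucc, b ∘ Fin.castSucc, hmono.comp (fun _ _ h => h),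
          ?_, ?_, ?_, rfl⟩
        · show m (Fin.castSucc ⟨0, hu'⟩) = 0
          have : Fin.castSucc (⟨0, hu'⟩ : Fin u) = ⟨0, hu⟩ := rfl
          rw [this, hm0]
        · show b (Fin.castSucc ⟨0, hu'⟩) ≠ 0
          have : Fin.castSucc (⟨0, hu'⟩ : Fin u) = ⟨0, hu⟩ := rfl
          rw [this]; exact hb0
        · calc ∑ i : Fin u, b (Fin.castSucc i) ≤ ∑ i, b i := by
                rw [Fin.sum_univ_castSucc]; exact Nat.le_add_right _ _
            _ < p := hsum
      -- distance from β to β'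
      have hdiff : r * ∑ i, (b i : ℝ) * (p : ℝ) ^ (-(m i : ℤ)) - β' =
          r * ((b (Fin.last u) : ℝ) * (p : ℝ) ^ (-(m (Fin.last u) : ℤ))) := by
        rw [hβ', Fin.sum_univ_castSucc, mul_add]
        ring
      have hzle : (p : ℝ) ^ (-(m (Fin.last u) : ℤ)) ≤ ((p : ℝ)⁻¹) ^ M := by
        have h1 : (p : ℝ) ^ (-(m (Fin.last u) : ℤ)) ≤ (p : ℝ) ^ (-(M : ℤ)) := by
          apply zpow_le_zpow_right₀ hp1.le
          exact neg_le_neg (by exact_mod_cast hcase.le)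
        have h2 : (p : ℝ) ^ (-(M : ℤ)) = ((p : ℝ)⁻¹) ^ M := by
          rw [zpow_neg, zpow_natCast, inv_pow]
        rw [h2] at h1; exact h1
      have hsmall : |r * ∑ i, (b i : ℝ) * (p : ℝ) ^ (-(m i : ℤ)) - β'| ≤ ε₀ / 2 := by
        rw [hdiff, abs_of_nonneg (by positivity)]
        have : r * ((b (Fin.last u) : ℝ) * (p : ℝ) ^ (-(m (Fin.last u) : ℤ))) ≤
            (r * p + 1) * ((p : ℝ)⁻¹) ^ M := by
          have hb : (b (Fin.last u) : ℝ) ≤ p := by exact_mod_cast hble _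
          calc r * ((b (Fin.last u) : ℝ) * (p : ℝ) ^ (-(m (Fin.last u) : ℤ)))
              ≤ r * (p * ((p : ℝ)⁻¹) ^ M) := by
                apply mul_le_mul_of_nonneg_left _ hr.le
                exact mul_le_mul hb hzle (by positivity) hp0.le
            _ ≤ (r * p + 1) * ((p : ℝ)⁻¹) ^ M := by
                rw [← mul_assoc]
                apply mul_le_mul_of_nonneg_right (by linarith) (by positivity)
        calc r * ((b (Fin.last u) : ℝ) * (p : ℝ) ^ (-(m (Fin.last u) : ℤ)))
            ≤ (r * p + 1) * ((p : ℝ)⁻¹) ^ M := this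
          _ ≤ (r * p + 1) * ((ε₀ / 2) / (r * p + 1)) := by
              apply mul_le_mul_of_nonneg_left hM.le (by positivity)
          _ = ε₀ / 2 := by
              rw [mul_comm, div_mul_cancel₀]
              positivity
      -- conclude
      have hfar : ε₀ ≤ |α - β'| := h0 β' hβ'mem
      have : ε₀ / 2 ≤ |α - r * ∑ i, (b i : ℝ) * (p : ℝ) ^ (-(m i : ℤ))| := by
        have htri : |α - β'| ≤ |α - r * ∑ i, (b i : ℝ) * (p : ℝ) ^ (-(m i : ℤ))| +
            |r * ∑ i, (b i : ℝ) * (p : ℝ) ^ (-(m i : ℤ)) - β'| := by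
          have := abs_sub_le α (r * ∑ i, (b i : ℝ) * (p : ℝ) ^ (-(m i : ℤ))) β'
          linarith [this]
        linarith
      exact le_trans (min_le_right _ _) this

/-- For any real `α ∉ B[u]`, the distance `inf{|α - β| : β ∈ B[u]}` is strictly positive. -/
theorem stmt2 (p : ℕ) (hp : p.Prime) (u : ℕ) (r : ℚ) (hr : 0 < r)
    (α : ℝ) (hα : α ∉ Bset p u (r : ℝ)) :
    ∃ ε > (0 : ℝ), ∀ β ∈ Bset p u (r : ℝ), ε ≤ |α - β| :=
  key p hp (r : ℝ) (by exact_mod_cast hr) u α hα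
end

section
/- Let 𝔄⁰ be the set of all ι = p^m(qα − (q−1)β) with m ∈ ℤ≥0, α ∈ A[u*, m], β ∈ B[u*, m] ∪ {0}, and |ι| ≤ b*(p−1). If ι ∈ 𝔄⁰ admits such a presentation with β ≠ 0, then m < N* (where q = p^{N*}). -/
/-- The truncated set `A[u,M]` (all exponents `n_i ≤ M`). -/
def AsetM (p u : ℕ) (w : ℝ) (M : ℕ) : Set ℝ :=
  {x | ∃ (n : Fin u → ℕ) (a : Fin u → ℤ),
    Monotone n ∧ (∀ h : 0 < u, n ⟨0, h⟩ = 0) ∧ (∀ i, n i ≤ M) ∧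
    (∀ i, 0 ≤ a i ∧ (a i : ℝ) < w) ∧
    x = ∑ i, (a i : ℝ) * (p : ℝ) ^ (-(n i : ℤ))}

/-- The truncated set `B[u,M]` (all exponents `m_i ≤ M`). -/
def BsetM (p u : ℕ) (r : ℝ) (M : ℕ) : Set ℝ :=
  {x | ∃ (hu : 0 < u) (m b : Fin u → ℕ),
    Monotone m ∧ m ⟨0, hu⟩ = 0 ∧ (∀ i, m i ≤ M) ∧ b ⟨0, hu⟩ ≠ 0 ∧
    (∑ i, b i) < p ∧
    x = r * ∑ i, (b i : ℝ) * (p : ℝ) ^ (-(m i : ℤ))}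

/-- If `ι = p^m(qα - (q-1)β) ∈ 𝔄⁰` admits a presentation with `β ≠ 0`
(i.e. `β ∈ B[u*,m]`) and `|ι| ≤ b*(p-1)`, then `m < N*` (where `q = p^{N*}`).
Condition C2 (`q·ρ(A[u*],B[u*]) ≥ 2r*(p-1)`) is assumed. -/
theorem stmt6 (p Nstar q bstar : ℕ) (hp : p.Prime) (hNstar : 1 ≤ Nstar)
    (hq : q = p ^ Nstar) (hbstar : 0 < bstar)
    (v₀ : ℝ) (hv₀ : 0 < v₀)
    (wstar rstar : ℝ) (hw : wstar = (p - 1 : ℝ) * v₀)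
    (hr : rstar = (bstar : ℝ) / ((q : ℝ) - 1))
    (ustar : ℕ) (hustar : ustar = (p - 1) * (p - 2) + 1)
    (hC2 : ∀ α ∈ Aset p ustar wstar, ∀ β ∈ Bset p ustar rstar,
      2 * rstar * ((p : ℝ) - 1) ≤ (q : ℝ) * |α - β|)
    (m : ℕ) (α β ι : ℝ)
    (hα : α ∈ AsetM p ustar wstar m) (hβ : β ∈ BsetM p ustar rstar m)
    (hι : ι = (p : ℝ) ^ m * ((q : ℝ) * α - ((q : ℝ) - 1) * β))
    (hbound : |ι| ≤ (bstar : ℝ) * ((p : ℝ) - 1)) :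
    m < Nstar := by
  have hp2 : (2:ℕ) ≤ p := hp.two_le
  have hpR : (2:ℝ) ≤ (p:ℝ) := by exact_mod_cast hp2
  have hpm1 : (0:ℝ) < (p:ℝ) - 1 := by linarith
  have hq2 : (2:ℕ) ≤ q := by
    rw [hq]
    calc 2 = 2^1 := (pow_one 2).symm
    _ ≤ p ^ Nstar := Nat.pow_le_pow_left hp2 1 |>.trans (Nat.pow_le_pow_right (by omega) hNstar)
  have hqR : (2:ℝ) ≤ (q:ℝ) := by exact_mod_cast hq2
  have hqm1 : (0:ℝ) < (q:ℝ) - 1 := by linarith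
  have hrpos : 0 < rstar := by
    rw [hr]; positivity
  have hbeq : (bstar:ℝ) = rstar * ((q:ℝ) - 1) := by
    rw [hr]; field_simp
  -- unpack memberships
  obtain ⟨n, a, hmono, h0, hnle, habnd, hαeq⟩ := hα
  obtain ⟨hu, mm, b, hmmono, hm0, hmle, hb0, hbsum, hβeq⟩ := hβ
  have hαA : α ∈ Aset p ustar wstar := ⟨n, a, hmono, h0, habnd, hαeq⟩
  have hβB : β ∈ Bset p ustar rstar := ⟨hu, mm, b, hmmono, hm0, hb0, hbsum, hβeq⟩
  -- bounds on β
  have hterm_nonneg : ∀ i : Fin ustar, (0:ℝ) ≤ (b i : ℝ) * (p : ℝ) ^ (-(mm i : ℤ)) := by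
    intro i; positivity
  have hSpos : 0 < ∑ i, (b i : ℝ) * (p : ℝ) ^ (-(mm i : ℤ)) := by
    apply Finset.sum_pos' (fun i _ => hterm_nonneg i)
    refine ⟨⟨0, hu⟩, Finset.mem_univ _, ?_⟩
    rw [hm0]
    simp only [CharP.cast_eq_zero, neg_zero, zpow_zero, mul_one]
    exact_mod_cast Nat.pos_of_ne_zero hb0
  have hβpos : 0 < β := by
    rw [hβeq]; exact mul_pos hrpos hSpos
  have hSle : (∑ i, (b i : ℝ) * (p : ℝ) ^ (-(mm i : ℤ))) ≤ (p:ℝ) - 1 := by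
    have h1 : ∀ i : Fin ustar, (b i : ℝ) * (p : ℝ) ^ (-(mm i : ℤ)) ≤ (b i : ℝ) := by
      intro i
      have : (p : ℝ) ^ (-(mm i : ℤ)) ≤ 1 := by
        apply zpow_le_one_of_nonpos₀ (by linarith) (by simp)
      calc (b i : ℝ) * (p : ℝ) ^ (-(mm i : ℤ)) ≤ (b i : ℝ) * 1 :=
            mul_le_mul_of_nonneg_left this (by positivity)
      _ = (b i : ℝ) := mul_one _
    calc (∑ i, (b i : ℝ) * (p : ℝ) ^ (-(mm i : ℤ))) ≤ ∑ i, (b i : ℝ) :=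
          Finset.sum_le_sum (fun i _ => h1 i)
    _ = ((∑ i, b i : ℕ) : ℝ) := by push_cast; ring
    _ ≤ (p:ℝ) - 1 := by
        have : (∑ i, b i) ≤ p - 1 := by omega
        have := (Nat.cast_le (α := ℝ)).2 this
        have hc : ((p - 1 : ℕ) : ℝ) = (p:ℝ) - 1 := by
          have : (1:ℕ) ≤ p := by omega
          push_cast [this]; ring
        linarith [hc ▸ ‹((∑ i, b i : ℕ) : ℝ) ≤ ((p - 1 : ℕ) : ℝ)›]
  have hβle : β ≤ rstar * ((p:ℝ) - 1) := by
    rw [hβeq]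
    exact mul_le_mul_of_nonneg_left hSle hrpos.le
  -- key lower bound
  have hC2' : 2 * rstar * ((p : ℝ) - 1) ≤ (q : ℝ) * |α - β| := hC2 α hαA β hβB
  have key : rstar * ((p:ℝ) - 1) ≤ |(q:ℝ) * α - ((q:ℝ) - 1) * β| := by
    have hrw : (q:ℝ) * α - ((q:ℝ) - 1) * β = (q:ℝ) * (α - β) + β := by ring
    have h2 : |(q:ℝ) * (α - β)| ≤ |(q:ℝ) * (α - β) + β| + |β| := by
      have := abs_add_le ((q:ℝ) * (α - β) + β) (-β)
      simpa using this
    have h3 : (q:ℝ) * |α - β| = |(q:ℝ) * (α - β)| := by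
      rw [abs_mul, abs_of_nonneg (by positivity : (0:ℝ) ≤ (q:ℝ))]
    rw [hrw]
    have hβabs : |β| = β := abs_of_pos hβpos
    nlinarith [h2, hC2', hβle, h3]
  -- combine with the bound on |ι|
  have hιabs : |ι| = (p:ℝ)^m * |(q:ℝ) * α - ((q:ℝ) - 1) * β| := by
    rw [hι, abs_mul, abs_of_nonneg (by positivity : (0:ℝ) ≤ (p:ℝ)^m)]
  have hchain : (p:ℝ)^m * (rstar * ((p:ℝ) - 1)) ≤ rstar * ((q:ℝ) - 1) * ((p:ℝ) - 1) := by
    calc (p:ℝ)^m * (rstar * ((p:ℝ) - 1)) ≤ (p:ℝ)^m * |(q:ℝ) * α - ((q:ℝ) - 1) * β| :=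
          mul_le_mul_of_nonneg_left key (by positivity)
    _ = |ι| := hιabs.symm
    _ ≤ (bstar : ℝ) * ((p:ℝ) - 1) := hbound
    _ = rstar * ((q:ℝ) - 1) * ((p:ℝ) - 1) := by rw [hbeq]
  have hpm : (p:ℝ)^m ≤ (q:ℝ) - 1 := by
    have hpos : 0 < rstar * ((p:ℝ) - 1) := mul_pos hrpos hpm1
    nlinarith [hchain, hpos]
  have hlt : (p:ℝ)^m < (q:ℝ) := by linarith
  have hltN : p^m < p^Nstar := by
    rw [← hq]; exact_mod_cast hlt
  exact (Nat.pow_lt_pow_iff_right hp.one_lt).mp hltN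
end

section
/- Let ι ∈ 𝔄⁰ have two presentations ι = p^m(qα − (q−1)β) = p^{m'}(qα' − (q−1)β') as in the definition of 𝔄⁰ (so p^m α, p^{m'}α' ∈ ℤ≥0 and p^m β/r*, p^{m'}β'/r* ∈ ℤ≥0). Then p^m α = p^{m'}α' and p^m β/r* = p^{m'}β'/r*. In particular these integers depend only on ι. -/
lemma hpow_aux {p : ℝ} (hpne : p ≠ 0) (M k : ℕ) (hk : k ≤ M) :
    p ^ (M - k) = p ^ M * p ^ (-(k:ℤ)) := by
  rw [← zpow_natCast p (M - k), Nat.cast_sub hk, sub_eq_add_neg, zpow_add₀ hpne,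
    zpow_natCast]

lemma AintM {p u M : ℕ} (hp : 0 < p) {w x : ℝ} (hx : x ∈ AsetM p u w M) :
    ∃ A : ℤ, 0 ≤ A ∧ (A : ℝ) = (p:ℝ) ^ M * x := by
  obtain ⟨n, a, -, -, hle, hpos, rfl⟩ := hx
  have hpne : (p:ℝ) ≠ 0 := by positivity
  refine ⟨∑ i, a i * (p:ℤ) ^ (M - n i), ?_, ?_⟩
  · exact Finset.sum_nonneg fun i _ => mul_nonneg (hpos i).1 (pow_nonneg (by positivity) _)
  · push_cast
    rw [Finset.mul_sum]
    refine Finset.sum_congr rfl fun i _ => ?_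
    rw [hpow_aux hpne M (n i) (hle i)]
    ring

lemma BintM {p u M : ℕ} (hp : 2 ≤ p) {r x : ℝ} (hx : x ∈ BsetM p u r M) :
    ∃ B : ℕ, p ^ M ≤ B ∧ B ≤ p ^ M * (p - 1) ∧ (B : ℝ) * r = (p:ℝ) ^ M * x := by
  obtain ⟨hu, n, b, hmono, h0, hle, hb0, hsum, rfl⟩ := hx
  have hpne : (p:ℝ) ≠ 0 := by positivity
  refine ⟨∑ i, b i * p ^ (M - n i), ?_, ?_, ?_⟩
  · calc p ^ M = b ⟨0, hu⟩ * p ^ (M - n ⟨0, hu⟩) * 1 / b ⟨0, hu⟩ := by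
          rw [h0, Nat.sub_zero, mul_one, Nat.mul_div_cancel_left _ (Nat.pos_of_ne_zero hb0)]
      _ ≤ b ⟨0, hu⟩ * p ^ (M - n ⟨0, hu⟩) := by
          rw [mul_one]
          exact Nat.div_le_self _ _
      _ ≤ ∑ i, b i * p ^ (M - n i) :=
          Finset.single_le_sum (f := fun i => b i * p ^ (M - n i))
            (fun i _ => Nat.zero_le _) (Finset.mem_univ _)
  · calc ∑ i, b i * p ^ (M - n i) ≤ ∑ i, b i * p ^ M :=
          Finset.sum_le_sum fun i _ =>
            Nat.mul_le_mul_left _ (Nat.pow_le_pow_right (by omega) (Nat.sub_le _ _))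
      _ = (∑ i, b i) * p ^ M := by rw [Finset.sum_mul]
      _ ≤ (p - 1) * p ^ M := Nat.mul_le_mul_right _ (by omega)
      _ = p ^ M * (p - 1) := Nat.mul_comm _ _
  · push_cast
    rw [Finset.sum_mul, Finset.mul_sum, Finset.mul_sum]
    refine Finset.sum_congr rfl fun i _ => ?_
    rw [hpow_aux hpne M (n i) (hle i)]
    ring

/-- Uniqueness of the presentation of `ι ∈ 𝔄⁰`: if
`ι = p^m(qα - (q-1)β) = p^{m'}(qα' - (q-1)β')` with `α ∈ A[u*,m]`, `β ∈ B[u*,m] ∪ {0}`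
(and similarly primed), and `|ι| ≤ b*(p-1)`, then `p^m α = p^{m'} α'` and
`p^m β/r* = p^{m'} β'/r*`; in particular these integers depend only on `ι`. -/
theorem stmt7 (p Nstar q bstar : ℕ) (hp : p.Prime) (hNstar : 1 ≤ Nstar)
    (hq : q = p ^ Nstar) (hbstar : 0 < bstar) (hbp : ¬ p ∣ bstar)
    (v₀ : ℝ) (hv₀ : 0 < v₀)
    (wstar rstar : ℝ) (hw : wstar = (p - 1 : ℝ) * v₀)
    (hr : rstar = (bstar : ℝ) / ((q : ℝ) - 1))
    (ustar : ℕ) (hustar : ustar = (p - 1) * (p - 2) + 1)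
    (hC2 : ∀ α ∈ Aset p ustar wstar, ∀ β ∈ Bset p ustar rstar,
      2 * rstar * ((p : ℝ) - 1) ≤ (q : ℝ) * |α - β|)
    (m m' : ℕ) (α β α' β' ι : ℝ)
    (hα : α ∈ AsetM p ustar wstar m) (hβ : β ∈ BsetM p ustar rstar m ∨ β = 0)
    (hα' : α' ∈ AsetM p ustar wstar m') (hβ' : β' ∈ BsetM p ustar rstar m' ∨ β' = 0)
    (hι : ι = (p : ℝ) ^ m * ((q : ℝ) * α - ((q : ℝ) - 1) * β))
    (hι' : ι = (p : ℝ) ^ m' * ((q : ℝ) * α' - ((q : ℝ) - 1) * β'))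
    (hbound : |ι| ≤ (bstar : ℝ) * ((p : ℝ) - 1)) :
    (p : ℝ) ^ m * α = (p : ℝ) ^ m' * α' ∧
      (p : ℝ) ^ m * β / rstar = (p : ℝ) ^ m' * β' / rstar := by
  have hp2 : 2 ≤ p := hp.two_le
  have hq1 : 1 < q := by
    rw [hq]; exact Nat.one_lt_pow (by omega) hp.one_lt
  have hpR : (0:ℝ) < p := by exact_mod_cast hp.pos
  have hpR1 : (1:ℝ) < (p:ℝ) := by exact_mod_cast hp.one_lt
  have hqR : (1:ℝ) < (q:ℝ) := by exact_mod_cast hq1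
  have hrpos : 0 < rstar := by
    rw [hr]
    exact div_pos (by exact_mod_cast hbstar) (by linarith)
  have hbr : (bstar:ℝ) = ((q:ℝ) - 1) * rstar := by
    rw [hr, mul_comm, div_mul_cancel₀ _ (ne_of_gt (by linarith : (0:ℝ) < (q:ℝ) - 1))]
  -- key claim: each presentation yields integers A, B with B < q
  have key : ∀ (M : ℕ) (a b : ℝ), a ∈ AsetM p ustar wstar M →
      (b ∈ BsetM p ustar rstar M ∨ b = 0) →
      ι = (p:ℝ) ^ M * ((q:ℝ) * a - ((q:ℝ) - 1) * b) →
      ∃ A B : ℤ, 0 ≤ A ∧ 0 ≤ B ∧ B < q ∧ (A:ℝ) = (p:ℝ) ^ M * a ∧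
        (B:ℝ) * rstar = (p:ℝ) ^ M * b := by
    intro M a b ha hb hiM
    obtain ⟨A, hA0, hAeq⟩ := AintM hp.pos ha
    rcases hb with hb | rfl
    · obtain ⟨B, hBlo, hBhi, hBeq⟩ := BintM hp2 hb
      have hpM : (0:ℝ) < (p:ℝ) ^ M := pow_pos hpR M
      have hBloR : (p:ℝ) ^ M ≤ (B:ℝ) := by exact_mod_cast hBlo
      have hBhiR : (B:ℝ) ≤ (p:ℝ) ^ M * ((p:ℝ) - 1) := by
        have := hBhi
        have h1 : ((p ^ M * (p - 1) : ℕ) : ℝ) = (p:ℝ) ^ M * ((p:ℝ) - 1) := by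
          push_cast [Nat.cast_sub (by omega : 1 ≤ p)]; ring
        calc (B:ℝ) ≤ ((p ^ M * (p - 1) : ℕ) : ℝ) := by exact_mod_cast hBhi
          _ = (p:ℝ) ^ M * ((p:ℝ) - 1) := h1
      have hb_pos : 0 < b := by
        by_contra h
        push_neg at h
        have h1 : (0:ℝ) < (B:ℝ) * rstar :=
          mul_pos (lt_of_lt_of_le hpM hBloR) hrpos
        nlinarith
      have hb_le : b ≤ rstar * ((p:ℝ) - 1) := by
        have h1 : (B:ℝ) * rstar ≤ (p:ℝ) ^ M * ((p:ℝ) - 1) * rstar :=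
          mul_le_mul_of_nonneg_right hBhiR hrpos.le
        rw [hBeq] at h1
        nlinarith
      have hc2 := hC2 a (by
          obtain ⟨n, aa, h1, h2, h3, h4, h5⟩ := ha
          exact ⟨n, aa, h1, h2, h4, h5⟩) b (by
          obtain ⟨hu, mm, bb, h1, h2, h3, h4, h5, h6⟩ := hb
          exact ⟨hu, mm, bb, h1, h2, h4, h5, h6⟩)
      -- lower bound on |ι|
      have habs : (q:ℝ) * |a - b| - b ≤ |(q:ℝ) * a - ((q:ℝ) - 1) * b| := by
        have hx : (q:ℝ) * a - ((q:ℝ) - 1) * b = (q:ℝ) * (a - b) + b := by ring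
        rw [hx]
        have h2 : |(q:ℝ) * (a - b)| ≤ |(q:ℝ) * (a - b) + b| + |b| := by
          have := abs_add_le ((q:ℝ) * (a - b) + b) (-b)
          simpa using this
        rw [abs_mul, abs_of_nonneg (by linarith : (0:ℝ) ≤ (q:ℝ))] at h2
        rw [abs_of_nonneg hb_pos.le] at h2
        linarith
      have hιlow : (p:ℝ) ^ M * (rstar * ((p:ℝ) - 1)) ≤ |ι| := by
        rw [hiM, abs_mul, abs_of_nonneg hpM.le]
        have h3 : rstar * ((p:ℝ) - 1) ≤ |(q:ℝ) * a - ((q:ℝ) - 1) * b| := by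
          linarith
        exact mul_le_mul_of_nonneg_left h3 hpM.le
      have hpMq : (p:ℝ) ^ M < (q:ℝ) := by
        rw [hbr] at hbound
        have hfac : 0 < rstar * ((p:ℝ) - 1) := mul_pos hrpos (by linarith)
        have h2 : (p:ℝ) ^ M * (rstar * ((p:ℝ) - 1)) ≤ ((q:ℝ) - 1) * (rstar * ((p:ℝ) - 1)) := by
          linarith [hιlow.trans hbound]
        have h4 : (p:ℝ) ^ M ≤ (q:ℝ) - 1 := le_of_mul_le_mul_right h2 hfac
        linarith
      have hMN : M < Nstar := by
        have : p ^ M < q := by exact_mod_cast hpMq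
        rw [hq] at this
        exact (Nat.pow_lt_pow_iff_right hp.one_lt).mp this
      have hBq : B < q := by
        calc B ≤ p ^ M * (p - 1) := hBhi
          _ < p ^ M * p :=
              mul_lt_mul_of_pos_left (by omega : p - 1 < p) (pow_pos hp.pos M)
          _ = p ^ (M + 1) := by rw [pow_succ]
          _ ≤ p ^ Nstar := Nat.pow_le_pow_right hp.pos (by omega)
          _ = q := hq.symm
      exact ⟨A, (B:ℤ), hA0, Int.natCast_nonneg B, by exact_mod_cast hBq, hAeq,
        by exact_mod_cast hBeq⟩
    · have hq0 : 0 < q := by omega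
      exact ⟨A, 0, hA0, le_refl _, by exact_mod_cast hq0, hAeq, by simp⟩
  obtain ⟨A, B, hA0, hB0, hBq, hAeq, hBeq⟩ := key m α β hα hβ hι
  obtain ⟨A', B', hA0', hB0', hBq', hAeq', hBeq'⟩ := key m' α' β' hα' hβ' hι'
  have e1 : ι = (q:ℝ) * A - (bstar:ℝ) * B := by
    rw [hι, hbr]
    linear_combination (-(q:ℝ)) * hAeq + ((q:ℝ) - 1) * hBeq
  have e2 : ι = (q:ℝ) * A' - (bstar:ℝ) * B' := by
    rw [hι', hbr]
    linear_combination (-(q:ℝ)) * hAeq' + ((q:ℝ) - 1) * hBeq'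
  have hreal : (q:ℝ) * A - (bstar:ℝ) * B = (q:ℝ) * A' - (bstar:ℝ) * B' := by
    rw [← e1, ← e2]
  have hint : (q:ℤ) * A - (bstar:ℤ) * B = (q:ℤ) * A' - (bstar:ℤ) * B' := by
    exact_mod_cast hreal
  have hcop : IsCoprime (q:ℤ) (bstar:ℤ) := by
    rw [Int.isCoprime_iff_gcd_eq_one, Int.gcd_natCast_natCast]
    rw [hq]
    exact Nat.Coprime.pow_left _ (hp.coprime_iff_not_dvd.mpr hbp)
  have hdvd : (q:ℤ) ∣ (bstar:ℤ) * (B - B') :=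
    ⟨A - A', by linear_combination (-1 : ℤ) * hint⟩
  have hdvd2 : (q:ℤ) ∣ (B - B') := hcop.dvd_of_dvd_mul_left hdvd
  have hBB' : B = B' := by
    have habs : |B - B'| < (q:ℤ) := by
      rw [abs_lt]; omega
    have := Int.eq_zero_of_abs_lt_dvd hdvd2 habs
    omega
  have hAA' : A = A' := by
    have hqne : (q:ℤ) ≠ 0 := by positivity
    have : (q:ℤ) * A = (q:ℤ) * A' := by
      rw [hBB'] at hint; linarith
    exact mul_left_cancel₀ (by exact_mod_cast (by omega : q ≠ 0)) this
  constructor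
  · rw [← hAeq, ← hAeq']
    exact_mod_cast hAA'
  · have hrne : rstar ≠ 0 := ne_of_gt hrpos
    rw [← hBeq, ← hBeq', mul_div_cancel_right₀ _ hrne, mul_div_cancel_right₀ _ hrne]
    exact_mod_cast hBB'
end

section
/- Define 𝔄⁰₀ = {ι ∈ 𝔄⁰ : ι has a presentation with β = 0}. Assume condition C3: r*(1 − p^{−N*}) ∈ (v₀ − δ₀, v₀), and that δ₀ is chosen so that any value v₀ − (a₁ + a₂/p^{n₂} + ⋯ + a_u/p^{n_u})/s which is positive is ≥ δ₀ (for u ≤ u*, a_i ∈ [0, (p−1)v₀)∩ℤ, 1 ≤ s < p). Then 𝔄⁰₀ = { qa : a ∈ ℤ≥0, a < (p−1)v₀ }. -/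
/-- `𝔄⁰₀ = {ι ∈ 𝔄⁰ : ι has a presentation with β = 0} = {qa : a ∈ ℤ≥0, a < (p-1)v₀}`,
assuming condition C3 (`r*(1 - p^{-N*}) ∈ (v₀ - δ₀, v₀)`) and the defining property of
`δ₀` (any positive value `v₀ - (a₁ + a₂/p^{n₂} + ⋯ + a_u/p^{n_u})/s` with `u ≤ u*`,
`1 ≤ s < p`, `a_i ∈ [0,(p-1)v₀) ∩ ℤ` is at least `δ₀`). -/
theorem stmt8 (p Nstar q bstar : ℕ) (hp : p.Prime) (hNstar : 1 ≤ Nstar)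
    (hq : q = p ^ Nstar) (hbstar : 0 < bstar) (hbp : ¬ p ∣ bstar)
    (v₀ δ₀ : ℝ) (hv₀ : 0 < v₀) (hδ₀ : 0 < δ₀)
    (wstar rstar : ℝ) (hw : wstar = (p - 1 : ℝ) * v₀)
    (hr : rstar = (bstar : ℝ) / ((q : ℝ) - 1))
    (ustar : ℕ) (hustar : ustar = (p - 1) * (p - 2) + 1)
    (hδ : ∀ s : ℕ, 1 ≤ s → s < p → ∀ u : ℕ, u ≤ ustar → ∀ x ∈ Aset p u wstar,
      0 < v₀ - x / s → δ₀ ≤ v₀ - x / s)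
    (hC3 : v₀ - δ₀ < rstar * (1 - (p : ℝ) ^ (-(Nstar : ℤ))) ∧
      rstar * (1 - (p : ℝ) ^ (-(Nstar : ℤ))) < v₀) :
    {ι : ℝ | ∃ (m : ℕ) (α : ℝ), α ∈ AsetM p ustar wstar m ∧
        ι = (p : ℝ) ^ m * ((q : ℝ) * α) ∧ |ι| ≤ (bstar : ℝ) * ((p : ℝ) - 1)} =
      {x : ℝ | ∃ a : ℕ, (a : ℝ) < ((p : ℝ) - 1) * v₀ ∧ x = (q : ℝ) * a} := by
  have hp2 : 2 ≤ p := hp.two_le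
  have hu0 : 0 < ustar := by omega
  have hpR : (2:ℝ) ≤ (p:ℝ) := by exact_mod_cast hp2
  have hqR : (1:ℝ) < (q:ℝ) := by
    have : 1 < q := by
      rw [hq]; exact Nat.one_lt_pow (by omega) (by omega)
    exact_mod_cast this
  have hq0 : (0:ℝ) < q := by linarith
  have hpm1 : (0:ℝ) < (p:ℝ) - 1 := by linarith
  have hpinv : (p:ℝ) ^ (-(Nstar:ℤ)) = (q:ℝ)⁻¹ := by
    rw [zpow_neg, zpow_natCast, hq]
    push_cast
    ring
  have hq1ne : (q:ℝ) - 1 ≠ 0 := by linarith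
  have hqne : (q:ℝ) ≠ 0 := by linarith
  have hrq : rstar * (1 - (p:ℝ) ^ (-(Nstar:ℤ))) = (bstar:ℝ) / q := by
    rw [hpinv, hr]
    field_simp
  ext x
  simp only [Set.mem_setOf_eq]
  constructor
  · rintro ⟨m, α, ⟨n, a, hmon, h0, hnm, hab, rfl⟩, rfl, habs⟩
    have hA : ((∑ i, (a i).toNat * p ^ (m - n i) : ℕ) : ℝ)
        = (p:ℝ)^m * ∑ i, (a i : ℝ) * (p:ℝ)^(-(n i : ℤ)) := by
      push_cast
      rw [Finset.mul_sum]
      refine Finset.sum_congr rfl fun i _ => ?_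
      have h1 : (((a i).toNat : ℕ) : ℝ) = (a i : ℝ) := by
        exact_mod_cast congrArg (fun z : ℤ => (z : ℝ)) (Int.toNat_of_nonneg (hab i).1)
      have h2 : (p:ℝ) ^ (m - n i) = (p:ℝ)^m * (p:ℝ)^(-(n i:ℤ)) := by
        have hle := hnm i
        rw [← zpow_natCast (p:ℝ) (m - n i), ← zpow_natCast (p:ℝ) m,
          ← zpow_add₀ (by positivity : (p:ℝ) ≠ 0)]
        congr 1
        omega
      rw [h1, h2]
      ring
    refine ⟨∑ i, (a i).toNat * p ^ (m - n i), ?_, by rw [hA]; ring⟩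
    have heq : (p:ℝ)^m * ((q:ℝ) * ∑ i, (a i : ℝ) * (p:ℝ)^(-(n i : ℤ)))
        = (q:ℝ) * ((∑ i, (a i).toNat * p ^ (m - n i) : ℕ) : ℝ) := by
      rw [hA]; ring
    rw [heq, abs_of_nonneg (by positivity)] at habs
    have hblt : (bstar:ℝ) < q * v₀ := by
      have h2 := hC3.2
      rw [hrq, div_lt_iff₀ hq0] at h2
      linarith
    set A : ℝ := ((∑ i, (a i).toNat * p ^ (m - n i) : ℕ) : ℝ)
    have hAnn : (0:ℝ) ≤ A := Nat.cast_nonneg _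
    nlinarith [mul_pos hq0 hpm1]
  · rintro ⟨a, ha, rfl⟩
    have hc : ((p - 1 : ℕ) : ℝ) = (p:ℝ) - 1 := by
      rw [Nat.cast_sub (by omega), Nat.cast_one]
    have hmem : (a:ℝ) ∈ Aset p 1 wstar := by
      refine ⟨fun _ => 0, fun _ => (a:ℤ), monotone_const, fun _ => rfl,
        fun i => ⟨Int.natCast_nonneg a, ?_⟩, ?_⟩
      · rw [hw]; push_cast; linarith [ha]
      · simp
    have hpos : 0 < v₀ - (a:ℝ) / ((p - 1 : ℕ) : ℝ) := by
      rw [hc, sub_pos, div_lt_iff₀ hpm1]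
      linarith [ha]
    have hδ' := hδ (p - 1) (by omega) (by omega) 1 (by omega) _ hmem hpos
    rw [hc] at hδ'
    have haq : (a:ℝ) ≤ (v₀ - δ₀) * ((p:ℝ) - 1) :=
      (div_le_iff₀ hpm1).mp (by linarith : (a:ℝ) / ((p:ℝ) - 1) ≤ v₀ - δ₀)
    have hblt : (v₀ - δ₀) * q < (bstar:ℝ) := by
      have h1 := hC3.1
      rw [hrq, lt_div_iff₀ hq0] at h1
      linarith
    refine ⟨0, (a:ℝ), ⟨fun _ => 0, fun i => if i = ⟨0, hu0⟩ then (a:ℤ) else 0,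
      monotone_const, fun _ => rfl, fun _ => le_refl 0, fun i => ?_, ?_⟩, by norm_num, ?_⟩
    · by_cases h : i = ⟨0, hu0⟩ <;> simp [h, hw] <;> nlinarith [ha, hv₀]
    · simp [apply_ite (fun z : ℤ => (z : ℝ))]
    · rw [abs_of_nonneg (by positivity)]
      have h1 : (q:ℝ) * a ≤ (q:ℝ) * ((v₀ - δ₀) * ((p:ℝ) - 1)) :=
        mul_le_mul_of_nonneg_left haq hq0.le
      have h2 : (v₀ - δ₀) * (q:ℝ) * ((p:ℝ) - 1) < (bstar:ℝ) * ((p:ℝ) - 1) :=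
        mul_lt_mul_of_pos_right hblt hpm1
      have h3 : (q:ℝ) * ((v₀ - δ₀) * ((p:ℝ) - 1)) = (v₀ - δ₀) * (q:ℝ) * ((p:ℝ) - 1) := by ring
      linarith
end

section
/- Let p be prime and η: tuples of positive integers → k (k a field of characteristic p) be 'structural constants' satisfying the shuffle identities: η(a₁) = 1 and for 0 ≤ s₁ ≤ s < p, η(a₁,…,a_{s₁})·η(a_{s₁+1},…,a_s) = Σ_{π ∈ I_{s₁s}} η(a_{π(1)},…,a_{π(s)}), where I_{s₁s} is the set of shuffles of {1,…,s₁} into {s₁+1,…,s}. For 1 ≤ s₁ ≤ s < p let Φ_{s s₁} be the set of permutations π of {1,…,s} with π(1) = s₁ such that for every l, {π(1),…,π(l)} is a set of consecutive integers, and set B_{s₁}(1,…,s) = Σ_{π∈Φ_{s s₁}} η(π(1),…,π(s)), with B₀ = B_{s+1} = 0. Then B_{s₁}(1,…,s) + B_{s₁+1}(1,…,s) = η(s₁, s₁−1,…,1)·η(s₁+1,…,s). -/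
open scoped Classical

/-- The list of all shuffles (interleavings) of two lists. -/
def shuffles {α : Type*} : List α → List α → List (List α)
  | [], l₂ => [l₂]
  | l₁, [] => [l₁]
  | a :: l₁, b :: l₂ =>
      ((shuffles l₁ (b :: l₂)).map (a :: ·)) ++ ((shuffles (a :: l₁) l₂).map (b :: ·))

/-- A permutation `π` of `{1,…,s}` is connected if for every `l`, the image set
`{π(1),…,π(l)}` is a set of consecutive integers. -/
def IsConnectedPerm {s : ℕ} (π : Equiv.Perm (Fin s)) : Prop :=
  ∀ l : Fin s, ∃ c : ℕ,
    (Finset.univ.filter fun i : Fin s => i ≤ l).image (fun i => (π i : ℕ)) =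
      Finset.Ico c (c + (l : ℕ) + 1)

/-! Write `L₁ = (s₁-1, …, 1, 0)` and `L₂ = (s₁, …, s-1)` (indices shifted to start at `0`), so
that the shuffle identity expands `η(L₁)·η(L₂)` as the sum of `η` over all shuffles of `L₁` and
`L₂`. In a word whose prefixes are all intervals, each new letter extends the current interval
at one of its ends; so the letters below the first one appear in decreasing order and those
above it in increasing order. Hence the one-line notations of the connected permutations starting
with `s₁ - 1` or `s₁` are exactly the shuffles of `L₁` and `L₂`, and both sides of the identity
sum `η` over the same words. -/

section Shuffles

variable {α : Type*}

@[simp]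
theorem shuffles_nil_left (l : List α) : shuffles [] l = [l] := by
  cases l <;> simp [shuffles]

@[simp]
theorem shuffles_nil_right (l : List α) : shuffles l [] = [l] := by
  cases l <;> simp [shuffles]

theorem shuffles_cons_cons (a b : α) (l₁ l₂ : List α) :
    shuffles (a :: l₁) (b :: l₂) =
      (shuffles l₁ (b :: l₂)).map (a :: ·) ++ (shuffles (a :: l₁) l₂).map (b :: ·) := by
  rw [shuffles]

theorem cons_mem_shuffles_cons_left {L l₁ l₂ : List α} (a : α) (h : L ∈ shuffles l₁ l₂) :
    a :: L ∈ shuffles (a :: l₁) l₂ := by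
  cases l₂ with
  | nil => simp_all
  | cons b l₂ =>
    exact shuffles_cons_cons a b l₁ l₂ ▸ List.mem_append_left _ (List.mem_map_of_mem h)

theorem cons_mem_shuffles_cons_right {L l₁ l₂ : List α} (b : α) (h : L ∈ shuffles l₁ l₂) :
    b :: L ∈ shuffles l₁ (b :: l₂) := by
  cases l₁ with
  | nil => simp_all
  | cons a l₁ =>
    exact shuffles_cons_cons a b l₁ l₂ ▸ List.mem_append_right _ (List.mem_map_of_mem h)

theorem mem_shuffles_of_filter_eq (q : α → Bool) :
    ∀ {L l₁ l₂ : List α}, L.filter q = l₁ → L.filter (fun x => !q x) = l₂ →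
      L ∈ shuffles l₁ l₂
  | [], _, _, rfl, rfl => by simp
  | x :: T, _, _, rfl, rfl => by
    by_cases hx : q x
    · simpa [List.filter_cons, hx] using
        cons_mem_shuffles_cons_left x (mem_shuffles_of_filter_eq q rfl rfl)
    · simpa [List.filter_cons, hx] using
        cons_mem_shuffles_cons_right x (mem_shuffles_of_filter_eq q rfl rfl)

theorem filter_eq_of_mem_shuffles (q : α → Bool) :
    ∀ {l₁ l₂ L : List α}, L ∈ shuffles l₁ l₂ → (∀ x ∈ l₁, q x) → (∀ x ∈ l₂, q x = false) →
      L.filter q = l₁ ∧ L.filter (fun x => !q x) = l₂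
  | [], l₂, L, h, _, h₂ => by
    simp only [shuffles_nil_left, List.mem_singleton] at h
    subst h
    exact ⟨List.filter_eq_nil_iff.2 (by simpa using h₂), List.filter_eq_self.2 (by simpa using h₂)⟩
  | a :: l₁, [], L, h, h₁, _ => by
    simp only [shuffles_nil_right, List.mem_singleton] at h
    subst h
    exact ⟨List.filter_eq_self.2 h₁, List.filter_eq_nil_iff.2 (by simpa using h₁)⟩
  | a :: l₁, b :: l₂, L, h, h₁, h₂ => by
    simp only [shuffles_cons_cons, List.mem_append, List.mem_map] at h
    rcases h with ⟨M, hM, rfl⟩ | ⟨M, hM, rfl⟩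
    · have ha : q a := h₁ a (by simp)
      have := filter_eq_of_mem_shuffles q hM (fun x hx => h₁ x (by simp [hx])) h₂
      simp [ha, this]
    · have hb : q b = false := h₂ b (by simp)
      have := filter_eq_of_mem_shuffles q hM h₁ (fun x hx => h₂ x (by simp [hx]))
      simp [hb, this]

theorem head?_mem_shuffles : ∀ {l₁ l₂ L : List α}, L ∈ shuffles l₁ l₂ →
    L.head? = l₁.head? ∨ L.head? = l₂.head?
  | [], l₂, L, h => by simp_all
  | a :: l₁, [], L, h => by simp_all
  | a :: l₁, b :: l₂, L, h => by
    simp only [shuffles_cons_cons, List.mem_append, List.mem_map] at h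
    rcases h with ⟨M, -, rfl⟩ | ⟨M, -, rfl⟩ <;> simp

theorem nodup_shuffles : ∀ {l₁ l₂ : List α}, (l₁ ++ l₂).Nodup → (shuffles l₁ l₂).Nodup
  | [], l₂, _ => by simp
  | a :: l₁, [], _ => by simp
  | a :: l₁, b :: l₂, h => by
    have hab : a ≠ b := by
      rintro rfl
      simp at h
    have h₁ : (l₁ ++ b :: l₂).Nodup := (List.nodup_cons.1 h).2
    have h₂ : (a :: l₁ ++ l₂).Nodup := h.sublist (by simp)
    rw [shuffles_cons_cons]
    refine List.Nodup.append ((nodup_shuffles h₁).map List.cons_injective)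
      ((nodup_shuffles h₂).map List.cons_injective) ?_
    simp only [List.disjoint_left, List.mem_map]
    rintro _ ⟨M, -, rfl⟩ ⟨N, -, hN⟩
    exact hab (List.cons_eq_cons.1 hN).1.symm

theorem shuffles_map {β : Type*} (f : α → β) : ∀ l₁ l₂ : List α,
    shuffles (l₁.map f) (l₂.map f) = (shuffles l₁ l₂).map (List.map f)
  | [], l₂ => by simp
  | a :: l₁, [] => by simp
  | a :: l₁, b :: l₂ => by
    have ih₁ := shuffles_map f l₁ (b :: l₂)
    have ih₂ := shuffles_map f (a :: l₁) l₂
    simp only [List.map_cons] at ih₁ ih₂ ⊢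
    simp [shuffles_cons_cons, ih₁, ih₂, Function.comp_def]

end Shuffles

def HasConsecutivePrefixes (L : List ℕ) : Prop :=
  ∀ n ≤ L.length, ∃ c, (L.take n).toFinset = Finset.Ico c (c + n)

theorem add_one_eq_or_eq_add_of_insert_Ico_eq_Ico {c c' n v : ℕ} (hn : 0 < n)
    (hv : v ∉ Finset.Ico c (c + n))
    (h : insert v (Finset.Ico c (c + n)) = Finset.Ico c' (c' + (n + 1))) :
    v + 1 = c ∨ v = c + n := by
  have hmem : ∀ x, x = v ∨ c ≤ x ∧ x < c + n ↔ c' ≤ x ∧ x < c' + (n + 1) := by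
    simpa [Finset.ext_iff] using h
  have := hmem v
  have := hmem c
  have := hmem (c + n - 1)
  have := hmem (c - 1)
  have := hmem (c + n)
  simp only [Finset.mem_Ico] at hv
  omega

theorem HasConsecutivePrefixes.pairwise {L : List ℕ} (hL : HasConsecutivePrefixes L)
    (hnd : L.Nodup) {h m : ℕ} (hh : L.head? = some h) (hm : m = h ∨ m = h + 1) :
    L.Pairwise fun x y => (y < m → y < x) ∧ (m ≤ y → x < y) := by
  rw [List.pairwise_iff_getElem]
  intro i j hi hj hij
  have hj0 : 0 < j := by omega
  obtain ⟨c, hc⟩ := hL j hj.le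
  obtain ⟨c', hc'⟩ := hL (j + 1) hj
  have hmem : ∀ k (hk : k < j), L[k] ∈ Finset.Ico c (c + j) := fun k hk => by
    rw [← hc, List.mem_toFinset]
    exact List.mem_take_iff_getElem.2 ⟨k, by omega, rfl⟩
  have hnew : L[j] ∉ Finset.Ico c (c + j) := by
    rw [← hc, List.mem_toFinset, List.mem_take_iff_getElem]
    rintro ⟨k, hk, hkj⟩
    exact absurd ((hnd.getElem_inj_iff).1 hkj) (by omega)
  have hext : insert L[j] (Finset.Ico c (c + j)) = Finset.Ico c' (c' + (j + 1)) := by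
    rw [← hc, ← hc', List.take_succ_eq_append_getElem hj, List.toFinset_append, Finset.union_comm]
    rfl
  have hend := add_one_eq_or_eq_add_of_insert_Ico_eq_Ico hj0 hnew hext
  have hx := Finset.mem_Ico.1 (hmem i hij)
  have hh' : L[0] = h := by
    simpa [List.head?_eq_getElem?, List.getElem?_eq_getElem (by omega : 0 < L.length)] using hh
  have hhead := Finset.mem_Ico.1 (hmem 0 hj0)
  have hne : L[j] ≠ L[0] := fun e => absurd ((hnd.getElem_inj_iff).1 e) (by omega)
  omega

section ReverseRangeShuffles

variable {s₁ s : ℕ} {L : List ℕ}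

theorem mem_take_reverse_range {i x : ℕ} (hi : i ≤ s₁) :
    x ∈ (List.range s₁).reverse.take i ↔ s₁ - i ≤ x ∧ x < s₁ := by
  rw [List.range_eq_range', List.reverse_range', ← List.map_take]
  simp only [List.take_range, List.mem_map, List.mem_range]
  constructor
  · rintro ⟨k, hk, rfl⟩
    omega
  · rintro ⟨h₁, h₂⟩
    exact ⟨s₁ - 1 - x, by omega, by omega⟩

theorem filter_eq_of_mem_shuffles_range
    (h : L ∈ shuffles (List.range s₁).reverse (List.range' s₁ (s - s₁))) :
    L.filter (fun x => decide (x < s₁)) = (List.range s₁).reverse ∧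
      L.filter (fun x => !decide (x < s₁)) = List.range' s₁ (s - s₁) :=
  filter_eq_of_mem_shuffles _ h (by simp) (by simp +contextual)

theorem hasConsecutivePrefixes_of_mem_shuffles
    (h : L ∈ shuffles (List.range s₁).reverse (List.range' s₁ (s - s₁))) :
    HasConsecutivePrefixes L := by
  intro n hn
  obtain ⟨hlow, hhigh⟩ := filter_eq_of_mem_shuffles_range h
  have hp₁ : (L.take n).filter (fun x => decide (x < s₁)) <+: (List.range s₁).reverse :=
    hlow ▸ (L.take_prefix n).filter _
  have hp₂ : (L.take n).filter (fun x => !decide (x < s₁)) <+: List.range' s₁ (s - s₁) :=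
    hhigh ▸ (L.take_prefix n).filter _
  obtain ⟨i, hi, e₁⟩ : ∃ i ≤ s₁,
      (L.take n).filter (fun x => decide (x < s₁)) = (List.range s₁).reverse.take i :=
    ⟨_, by simpa using hp₁.length_le, List.prefix_iff_eq_take.1 hp₁⟩
  obtain ⟨j, hj, e₂⟩ : ∃ j ≤ s - s₁,
      (L.take n).filter (fun x => !decide (x < s₁)) = (List.range' s₁ (s - s₁)).take j :=
    ⟨_, by simpa using hp₂.length_le, List.prefix_iff_eq_take.1 hp₂⟩
  have hij : i + j = n := by
    have := (List.filter_append_perm (fun x => decide (x < s₁)) (L.take n)).length_eq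
    rw [List.length_append, e₁, e₂] at this
    simp at this
    omega
  -- the first `n` letters are `[s₁ - i, s₁)` from one list and `[s₁, s₁ + j)` from the other
  refine ⟨s₁ - i, ?_⟩
  ext x
  have m₁ := congrArg (x ∈ ·) e₁
  have m₂ := congrArg (x ∈ ·) e₂
  simp only [List.mem_filter, mem_take_reverse_range hi, List.take_range'_of_length_ge hj,
    List.mem_range'_1, eq_iff_iff] at m₁ m₂
  rw [List.mem_toFinset, Finset.mem_Ico]
  by_cases hx : x < s₁ <;> by_cases hm : x ∈ L.take n <;> simp [hx, hm] at m₁ m₂ ⊢ <;> omega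

theorem reverse_range_append_range'_perm (hs : s₁ ≤ s) :
    ((List.range s₁).reverse ++ List.range' s₁ (s - s₁)).Perm (List.range s) := by
  refine ((List.reverse_perm _).append_right _).trans ?_
  have := List.range'_append_1 (s := 0) (m := s₁) (n := s - s₁)
  rw [zero_add, Nat.add_sub_cancel' hs] at this
  rw [List.range_eq_range', List.range_eq_range', this]

theorem perm_range_of_mem_shuffles (hs : s₁ ≤ s)
    (h : L ∈ shuffles (List.range s₁).reverse (List.range' s₁ (s - s₁))) :
    L.Perm (List.range s) := by
  obtain ⟨hlow, hhigh⟩ := filter_eq_of_mem_shuffles_range h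
  have := (List.filter_append_perm (fun x => decide (x < s₁)) L).symm
  rw [hlow, hhigh] at this
  exact this.trans (reverse_range_append_range'_perm hs)

theorem head?_of_mem_shuffles (hs₁ : 1 ≤ s₁) (hs : s₁ ≤ s)
    (h : L ∈ shuffles (List.range s₁).reverse (List.range' s₁ (s - s₁))) :
    L.head? = some (s₁ - 1) ∨ L.head? = some s₁ := by
  have hlen : L.length = s := by simpa using (perm_range_of_mem_shuffles hs h).length_eq
  obtain ⟨m, rfl⟩ : ∃ m, s₁ = m + 1 := ⟨s₁ - 1, by omega⟩
  rcases head?_mem_shuffles h with h | h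
  · simp [h, List.range_succ]
  · rcases Nat.eq_zero_or_pos (s - (m + 1)) with h0 | h0
    · simp [h0] at h
      simp [h] at hlen
      omega
    · obtain ⟨k, hk⟩ : ∃ k, s - (m + 1) = k + 1 := ⟨_, (Nat.succ_pred_eq_of_pos h0).symm⟩
      simp [h, hk, List.range'_succ]

theorem mem_shuffles_of_hasConsecutivePrefixes (hs₁ : 1 ≤ s₁) (hs : s₁ ≤ s)
    (hperm : L.Perm (List.range s)) (hL : HasConsecutivePrefixes L)
    (hhead : L.head? = some (s₁ - 1) ∨ L.head? = some s₁) :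
    L ∈ shuffles (List.range s₁).reverse (List.range' s₁ (s - s₁)) := by
  obtain ⟨h, hh, hm⟩ : ∃ h, L.head? = some h ∧ (s₁ = h ∨ s₁ = h + 1) := by
    rcases hhead with e | e
    · exact ⟨_, e, Or.inr (by omega)⟩
    · exact ⟨_, e, Or.inl rfl⟩
  have hnd : L.Nodup := hperm.nodup_iff.2 List.nodup_range
  have hpair := hL.pairwise hnd hh hm
  apply mem_shuffles_of_filter_eq (fun x => decide (x < s₁))
  · refine List.Perm.eq_of_pairwise (le := (· > ·)) (fun a b _ _ hab hba => by omega) ?_ ?_ ?_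
    · exact List.pairwise_filter.2 (hpair.imp fun hxy _ hy => hxy.1 (by simpa using hy))
    · exact List.pairwise_reverse.2 List.pairwise_lt_range
    · refine (List.perm_ext_iff_of_nodup (hnd.filter _)
        (List.nodup_reverse.2 List.nodup_range)).2 fun x => ?_
      simp [hperm.mem_iff]
      omega
  · refine List.Perm.eq_of_pairwise (le := (· < ·)) (fun a b _ _ hab hba => by omega) ?_ ?_ ?_
    · exact List.pairwise_filter.2 (hpair.imp fun hxy _ hy => hxy.2 (by simpa using hy))
    · exact List.pairwise_lt_range'
    · refine (List.perm_ext_iff_of_nodup (hnd.filter _) List.nodup_range').2 fun x => ?_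
      simp [hperm.mem_iff]
      omega

theorem mem_shuffles_reverse_range_iff (hs₁ : 1 ≤ s₁) (hs : s₁ ≤ s) :
    L ∈ shuffles (List.range s₁).reverse (List.range' s₁ (s - s₁)) ↔
      L.Perm (List.range s) ∧ HasConsecutivePrefixes L ∧
        (L.head? = some (s₁ - 1) ∨ L.head? = some s₁) :=
  ⟨fun h => ⟨perm_range_of_mem_shuffles hs h, hasConsecutivePrefixes_of_mem_shuffles h,
    head?_of_mem_shuffles hs₁ hs h⟩,
    fun ⟨hperm, hL, hhead⟩ => mem_shuffles_of_hasConsecutivePrefixes hs₁ hs hperm hL hhead⟩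

end ReverseRangeShuffles

section PermLists

variable {s : ℕ}

def Equiv.Perm.oneLine (π : Equiv.Perm (Fin s)) : List ℕ :=
  List.ofFn fun i => (π i : ℕ)

theorem Equiv.Perm.head?_oneLine (π : Equiv.Perm (Fin s)) (hs : 0 < s) :
    π.oneLine.head? = some (π ⟨0, hs⟩ : ℕ) := by
  simp [Equiv.Perm.oneLine, List.head?_eq_getElem?, hs]

theorem image_filter_le_eq_toFinset_take_oneLine (π : Equiv.Perm (Fin s)) (l : Fin s) :
    (Finset.univ.filter fun i : Fin s => i ≤ l).image (fun i => (π i : ℕ)) =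
      (π.oneLine.take (l + 1)).toFinset := by
  ext x
  simp only [Equiv.Perm.oneLine, Finset.mem_image, Finset.mem_filter, Finset.mem_univ, true_and,
    List.mem_toFinset, List.mem_take_iff_getElem, List.getElem_ofFn, List.length_ofFn]
  constructor
  · rintro ⟨i, hi, rfl⟩
    exact ⟨(i : ℕ), by rw [Fin.le_def] at hi; omega, rfl⟩
  · rintro ⟨n, hn, rfl⟩
    exact ⟨⟨n, by omega⟩, by rw [Fin.le_def]; simp only; omega, rfl⟩

theorem isConnectedPerm_iff (π : Equiv.Perm (Fin s)) :
    IsConnectedPerm π ↔ HasConsecutivePrefixes π.oneLine := by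
  constructor
  · intro h n hn
    rcases n with _ | n
    · exact ⟨0, by simp⟩
    · simpa [image_filter_le_eq_toFinset_take_oneLine, Nat.add_assoc] using
        h ⟨n, by simpa [Equiv.Perm.oneLine] using hn⟩
  · intro h l
    simpa [image_filter_le_eq_toFinset_take_oneLine, Nat.add_assoc] using
      h (l + 1) (by simp [Equiv.Perm.oneLine])

theorem Equiv.Perm.oneLine_perm_range (π : Equiv.Perm (Fin s)) :
    π.oneLine.Perm (List.range s) :=
  (π.ofFn_comp_perm Fin.val).trans (by simp [List.ofFn_eq_map])

theorem Equiv.Perm.oneLine_injective : Function.Injective (@Equiv.Perm.oneLine s) :=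
  fun _ _ h => Equiv.ext fun i => Fin.val_injective (congrFun (List.ofFn_inj.1 h) i)

theorem exists_oneLine_eq {L : List ℕ} (h : L.Perm (List.range s)) :
    ∃ π : Equiv.Perm (Fin s), π.oneLine = L := by
  have hlen : L.length = s := by simpa using h.length_eq
  have hlt : ∀ i : Fin s, L[(i : ℕ)] < s := fun i => by
    simpa using h.subset (List.getElem_mem (by omega))
  let g : Fin s → Fin s := fun i => ⟨L[(i : ℕ)], hlt i⟩
  have hg : g.Injective := fun i j hij =>
    Fin.ext (((h.nodup_iff.2 List.nodup_range).getElem_inj_iff).1 (Fin.mk.inj hij))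
  exact ⟨Equiv.ofBijective g (Finite.injective_iff_bijective.1 hg),
    List.ext_getElem (by simp [Equiv.Perm.oneLine, hlen]) fun n _ _ => by
      simp [Equiv.Perm.oneLine, g]⟩

theorem sum_ite_oneLine_eq_sum {M : Type*} [AddCommMonoid M] (P : List ℕ → Prop)
    [DecidablePred P] (f : List ℕ → M) {X : List (List ℕ)} (hX : X.Nodup)
    (hmem : ∀ L, L ∈ X ↔ L.Perm (List.range s) ∧ P L) :
    ∑ π : Equiv.Perm (Fin s), (if P π.oneLine then f π.oneLine else 0) = (X.map f).sum := by
  rw [← Finset.sum_filter, ← List.sum_toFinset f hX]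
  refine Finset.sum_bij (fun π _ => π.oneLine) ?_ (fun _ _ _ _ h => Equiv.Perm.oneLine_injective h)
    ?_ (fun _ _ => rfl)
  · intro π hπ
    simpa [hmem, Equiv.Perm.oneLine_perm_range] using hπ
  · intro L hL
    obtain ⟨hperm, hP⟩ := (hmem L).1 (List.mem_toFinset.1 hL)
    obtain ⟨π, rfl⟩ := exists_oneLine_eq hperm
    exact ⟨π, by simpa using hP, rfl⟩

end PermLists

theorem sum_ite_add_sum_ite_succ_eq_sum_ite_or {ι M : Type*} [Fintype ι]
    [AddCommMonoid M] (h : ι → ℕ) (C : ι → Prop) [DecidablePred C] (g : ι → M) {n : ℕ}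
    (hn : 1 ≤ n) :
    ((∑ i, if h i + 1 = n ∧ C i then g i else 0) + ∑ i, if h i + 1 = n + 1 ∧ C i then g i else 0) =
      ∑ i, if C i ∧ (h i = n - 1 ∨ h i = n) then g i else 0 := by
  rw [← Finset.sum_add_distrib]
  refine Finset.sum_congr rfl fun i _ => ?_
  split_ifs <;> simp_all
  omega

section ExtendByZero

variable {s : ℕ} (a : Fin s → ℕ)

def extendByZero : ℕ → ℕ := fun n => if h : n < s then a ⟨n, h⟩ else 0

theorem ofFn_comp_eq_map_extendByZero (π : Equiv.Perm (Fin s)) :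
    List.ofFn (fun i => a (π i)) = π.oneLine.map (extendByZero a) := by
  simp [Equiv.Perm.oneLine, extendByZero, List.map_ofFn, Function.comp_def]

theorem map_extendByZero_reverse_range {s₁ : ℕ} (hs₁ : s₁ ≤ s) :
    (List.range s₁).reverse.map (extendByZero a) =
      List.ofFn fun i : Fin s₁ => a ⟨s₁ - 1 - (i : ℕ), by omega⟩ := by
  refine List.ext_getElem (by simp) fun n h _ => ?_
  simp only [List.length_map, List.length_reverse, List.length_range] at h
  simp [extendByZero, show s₁ - 1 - n < s by omega]

theorem map_extendByZero_range' {s₁ : ℕ} (hs₁ : s₁ ≤ s) :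
    (List.range' s₁ (s - s₁)).map (extendByZero a) =
      List.ofFn fun i : Fin (s - s₁) => a ⟨s₁ + (i : ℕ), by omega⟩ := by
  refine List.ext_getElem (by simp) fun n h _ => ?_
  simp only [List.length_map, List.length_range'] at h
  simp [extendByZero, show s₁ + n < s by omega]

end ExtendByZero

/-- For structural constants `η` satisfying the shuffle identities, with
`B_{s₁}(1,…,s) = Σ_{π ∈ Φ_{s s₁}} η(a_{π(1)},…,a_{π(s)})` summed over connected
permutations `π` with `π(1) = s₁`, one has
`B_{s₁} + B_{s₁+1} = η(a_{s₁},…,a_1)·η(a_{s₁+1},…,a_s)` for `1 ≤ s₁ ≤ s < p`. -/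
theorem stmt12 (p : ℕ) (k : Type*) [Field k]
    (η : List ℕ → k)
    (hshuffle : ∀ l₁ l₂ : List ℕ, l₁.length + l₂.length < p →
      η l₁ * η l₂ = ((shuffles l₁ l₂).map η).sum)
    (s : ℕ) (hs0 : 0 < s) (hs : s < p) (a : Fin s → ℕ)
    (B : ℕ → k)
    (hB : ∀ s₁ : ℕ, B s₁ = ∑ π : Equiv.Perm (Fin s),
      if ((π ⟨0, hs0⟩ : ℕ) + 1 = s₁ ∧ IsConnectedPerm π) then
        η (List.ofFn fun i => a (π i)) else 0) :
    ∀ (s₁ : ℕ) (_hs₁ : 1 ≤ s₁) (hs₁s : s₁ ≤ s),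
      B s₁ + B (s₁ + 1) =
        η (List.ofFn fun i : Fin s₁ => a ⟨s₁ - 1 - (i : ℕ), by have := i.isLt; have := hs₁s; omega⟩) *
        η (List.ofFn fun i : Fin (s - s₁) => a ⟨s₁ + (i : ℕ), by have := i.isLt; have := hs₁s; omega⟩) := by
  intro s₁ hs₁ hs₁s
  have hnodup :=
    nodup_shuffles ((reverse_range_append_range'_perm hs₁s).nodup_iff.2 List.nodup_range)
  calc B s₁ + B (s₁ + 1)
      = ∑ π : Equiv.Perm (Fin s), if HasConsecutivePrefixes π.oneLine ∧
          (π.oneLine.head? = some (s₁ - 1) ∨ π.oneLine.head? = some s₁) then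
            η (π.oneLine.map (extendByZero a)) else 0 := by
        simp only [hB, sum_ite_add_sum_ite_succ_eq_sum_ite_or _ _ _ hs₁,
          isConnectedPerm_iff, Equiv.Perm.head?_oneLine _ hs0, Option.some.injEq,
          ofFn_comp_eq_map_extendByZero]
    _ = ((shuffles (List.range s₁).reverse (List.range' s₁ (s - s₁))).map
          fun L => η (L.map (extendByZero a))).sum :=
        sum_ite_oneLine_eq_sum _ (fun L => η (L.map (extendByZero a))) hnodup
          fun L => mem_shuffles_reverse_range_iff hs₁ hs₁s
    _ = η ((List.range s₁).reverse.map (extendByZero a)) *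
          η ((List.range' s₁ (s - s₁)).map (extendByZero a)) := by
        rw [hshuffle _ _ (by simp; omega), shuffles_map, List.map_map, Function.comp_def]
    _ = _ := by
        rw [map_extendByZero_reverse_range a hs₁s, map_extendByZero_range' a hs₁s]
end

section
/- Let X₁,…,X_s be elements of an associative ring. Let Φ_{s s₁} be the set of permutations π of {1,…,s} with π(1) = s₁ such that for every 1 ≤ l ≤ s the image set {π(1),…,π(l)} consists of consecutive integers. Then Σ_{s₁=1}^{s} Σ_{π ∈ Φ_{s s₁}} (−1)^{s₁−1} X_{π^{−1}(1)} X_{π^{−1}(2)} ⋯ X_{π^{−1}(s)} = [⋯[[X₁, X₂], X₃], …, X_s], the left-normed iterated commutator. -/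
/-! Induct on the number of letters, locating the last letter `X_s` in each word. In a connected
permutation the first `s - 1` letters fill a segment of `s - 1` consecutive positions, so `X_s`
stands either last or first, and deleting it leaves a connected permutation of the remaining
letters; conversely both ways of inserting it preserve connectedness. Putting `X_s` last keeps
the sign, putting it first shifts every position by one and flips the sign, so the sum for `s`
letters is `A X_s - X_s A` with `A` the sum for `s - 1` letters: the recursion of the
left-normed commutator. -/

open scoped Classical

/-- The left-normed iterated commutator `[⋯[[X₁,X₂],X₃],…,X_s]` of a nonempty list. -/
def iteratedCommutator {R : Type*} [Ring R] : List R → R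
  | [] => 0
  | x :: xs => xs.foldl (fun acc y => acc * y - y * acc) x

open Equiv Finset

section Extensions

variable {m : ℕ}

/- A permutation sends each letter to its position in the word: `appendLast σ` writes the new
letter at the end of the word of `σ`, `prependLast σ` in front of it. -/
def appendLast (σ : Perm (Fin m)) : Perm (Fin (m + 1)) :=
  permCongr finSuccEquivLast.symm σ.optionCongr

def prependLast (σ : Perm (Fin m)) : Perm (Fin (m + 1)) :=
  finRotate (m + 1) * appendLast σ

@[simp] lemma appendLast_last (σ : Perm (Fin m)) : appendLast σ (Fin.last m) = Fin.last m := by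
  simp [appendLast]

@[simp] lemma appendLast_castSucc (σ : Perm (Fin m)) (i : Fin m) :
    appendLast σ i.castSucc = (σ i).castSucc := by
  simp [appendLast]

lemma appendLast_symm (σ : Perm (Fin m)) : (appendLast σ).symm = appendLast σ.symm := rfl

@[simp] lemma prependLast_last (σ : Perm (Fin m)) : prependLast σ (Fin.last m) = 0 := by
  simp [prependLast]

@[simp] lemma prependLast_castSucc (σ : Perm (Fin m)) (i : Fin m) :
    prependLast σ i.castSucc = (σ i).succ := by
  simp [prependLast]

lemma finRotate_symm_zero : (finRotate (m + 1)).symm 0 = Fin.last m :=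
  (symm_apply_eq _).2 (finRotate_last (n := m)).symm

lemma finRotate_symm_succ (i : Fin m) : (finRotate (m + 1)).symm i.succ = i.castSucc :=
  (symm_apply_eq _).2 (by simp)

lemma appendLast_injective : Function.Injective (appendLast (m := m)) :=
  (permCongr _).injective.comp optionCongr_injective

lemma prependLast_injective : Function.Injective (prependLast (m := m)) :=
  (mul_right_injective _).comp appendLast_injective

lemma exists_appendLast_eq {π : Perm (Fin (m + 1))} (h : π (Fin.last m) = Fin.last m) :
    ∃ σ, appendLast σ = π := by
  set τ := (permCongr finSuccEquivLast.symm).symm π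
  have hτ : τ none = none := by simp [τ, h]
  refine ⟨removeNone τ, (eq_symm_apply _).1 ?_⟩
  rw [map_equiv_removeNone, hτ, swap_self, ← Perm.one_def, one_mul]

lemma exists_prependLast_eq {π : Perm (Fin (m + 1))} (h : π (Fin.last m) = 0) :
    ∃ σ, prependLast σ = π := by
  obtain ⟨σ, hσ⟩ := exists_appendLast_eq (π := (finRotate (m + 1))⁻¹ * π)
    (by rw [Perm.mul_apply, h, Perm.inv_def, finRotate_symm_zero])
  exact ⟨σ, by rw [prependLast, hσ, mul_inv_cancel_left]⟩

lemma ofFn_appendLast_symm {α : Type*} (X : Fin (m + 1) → α) (σ : Perm (Fin m)) :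
    (List.ofFn fun j => X ((appendLast σ).symm j)) =
      (List.ofFn fun j => X (σ.symm j).castSucc).concat (X (Fin.last m)) := by
  rw [List.ofFn_succ', appendLast_symm]
  simp only [appendLast_last, appendLast_castSucc]

lemma ofFn_prependLast_symm {α : Type*} (X : Fin (m + 1) → α) (σ : Perm (Fin m)) :
    (List.ofFn fun j => X ((prependLast σ).symm j)) =
      X (Fin.last m) :: List.ofFn fun j => X (σ.symm j).castSucc := by
  rw [List.ofFn_succ]
  simp only [prependLast, Perm.mul_def, symm_trans_apply, appendLast_symm, finRotate_symm_zero,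
    finRotate_symm_succ, appendLast_last, appendLast_castSucc]

end Extensions

section Connectivity

variable {m : ℕ}

lemma image_val_filter_le_castSucc (π : Perm (Fin (m + 1))) (l : Fin m) :
    ((univ.filter fun i => i ≤ l.castSucc).image fun i => (π i : ℕ)) =
      (univ.filter fun i => i ≤ l).image fun i => (π i.castSucc : ℕ) := by
  rw [filter_ge_eq_Iic, filter_ge_eq_Iic, ← Fin.finsetImage_castSucc_Iic, image_image]
  rfl

lemma image_val_filter_le_last (π : Perm (Fin (m + 1))) :
    ((univ.filter fun i => i ≤ Fin.last m).image fun i => (π i : ℕ)) = range (m + 1) := by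
  rw [filter_true_of_mem fun i _ => Fin.le_last i]
  ext n
  simp only [mem_image, mem_univ, true_and, mem_range]
  exact ⟨fun ⟨i, hi⟩ => hi ▸ (π i).isLt, fun hn => ⟨π.symm ⟨n, hn⟩, by simp⟩⟩

lemma isConnectedPerm_iff_castSucc (π : Perm (Fin (m + 1))) :
    IsConnectedPerm π ↔ ∀ l : Fin m, ∃ c : ℕ,
      (univ.filter fun i => i ≤ l).image (fun i => (π i.castSucc : ℕ)) = Ico c (c + l + 1) := by
  rw [IsConnectedPerm, Fin.forall_fin_succ']
  simp only [image_val_filter_le_castSucc, image_val_filter_le_last, Fin.val_castSucc,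
    Fin.val_last]
  exact and_iff_left ⟨0, by rw [range_eq_Ico, zero_add]⟩

lemma exists_image_add_one_eq_Ico_iff (S : Finset ℕ) (k : ℕ) :
    (∃ c, S.image (· + 1) = Ico c (c + k + 1)) ↔ ∃ c, S = Ico c (c + k + 1) := by
  constructor
  · rintro ⟨c, hc⟩
    obtain ⟨a, -, ha⟩ := mem_image.1 (hc ▸ left_mem_Ico.2 (by omega) : c ∈ S.image (· + 1))
    refine ⟨a, image_injective (add_left_injective 1) ?_⟩
    rw [hc, image_add_right_Ico, ← ha]
    congr 1
    omega
  · rintro ⟨c, rfl⟩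
    exact ⟨c + 1, by rw [image_add_right_Ico]; congr 1; omega⟩

lemma isConnectedPerm_appendLast_iff (σ : Perm (Fin m)) :
    IsConnectedPerm (appendLast σ) ↔ IsConnectedPerm σ := by
  simp only [isConnectedPerm_iff_castSucc, appendLast_castSucc, Fin.val_castSucc]
  rfl

lemma isConnectedPerm_prependLast_iff (σ : Perm (Fin m)) :
    IsConnectedPerm (prependLast σ) ↔ IsConnectedPerm σ := by
  simp only [isConnectedPerm_iff_castSucc, prependLast_castSucc, Fin.val_succ]
  exact forall_congr' fun l => by
    simpa only [image_image, Function.comp_def] using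
      exists_image_add_one_eq_Ico_iff ((univ.filter fun i => i ≤ l).image fun i => (σ i : ℕ)) l

lemma IsConnectedPerm.apply_last_eq_last_or_zero (hm : 0 < m) {π : Perm (Fin (m + 1))}
    (hπ : IsConnectedPerm π) : π (Fin.last m) = Fin.last m ∨ π (Fin.last m) = 0 := by
  obtain ⟨c, hc⟩ := (isConnectedPerm_iff_castSucc π).1 hπ ⟨m - 1, by omega⟩
  have mem_prefix : ∀ j, j ≠ π (Fin.last m) → (j : ℕ) ∈ Ico c (c + (m - 1) + 1) := by
    intro j hj
    obtain ⟨i, hi⟩ := Fin.exists_castSucc_eq.2 (fun h => hj (by rw [← h, apply_symm_apply]))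
    rw [← hc]
    exact mem_image.2 ⟨i, by simp [Fin.le_def]; omega, by rw [hi, apply_symm_apply]⟩
  by_contra! h
  have h0 := mem_prefix 0 h.2.symm
  have hlast := mem_prefix (Fin.last m) h.1.symm
  simp only [mem_Ico, Fin.val_zero, Fin.val_last] at h0 hlast
  omega

end Connectivity

section Sums

variable {R : Type*} [Ring R] {m : ℕ}

noncomputable def connectedTerm (X : Fin (m + 1) → R) (π : Perm (Fin (m + 1))) : R :=
  if IsConnectedPerm π then (-1) ^ (π 0 : ℕ) * (List.ofFn fun i => X (π.symm i)).prod else 0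

lemma connectedTerm_appendLast (X : Fin (m + 2) → R) (σ : Perm (Fin (m + 1))) :
    connectedTerm X (appendLast σ) = connectedTerm (Fin.init X) σ * X (Fin.last _) := by
  rw [connectedTerm, connectedTerm, isConnectedPerm_appendLast_iff]
  split_ifs
  · rw [← Fin.castSucc_zero, appendLast_castSucc, Fin.val_castSucc, ofFn_appendLast_symm,
      List.prod_concat, mul_assoc]
    rfl
  · rw [zero_mul]

lemma connectedTerm_prependLast (X : Fin (m + 2) → R) (σ : Perm (Fin (m + 1))) :
    connectedTerm X (prependLast σ) = -(X (Fin.last _) * connectedTerm (Fin.init X) σ) := by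
  rw [connectedTerm, connectedTerm, isConnectedPerm_prependLast_iff]
  split_ifs
  · rw [← Fin.castSucc_zero, prependLast_castSucc, Fin.val_succ, ofFn_prependLast_symm,
      List.prod_cons, pow_succ, mul_neg_one, neg_mul, ((Commute.neg_one_left _).pow_left _).left_comm]
    rfl
  · rw [mul_zero, neg_zero]

lemma sum_connectedTerm_succ (X : Fin (m + 2) → R) :
    ∑ π, connectedTerm X π =
      (∑ σ, connectedTerm (Fin.init X) σ) * X (Fin.last _) -
        X (Fin.last _) * ∑ σ, connectedTerm (Fin.init X) σ := by
  have hdisj : ∀ σ τ, appendLast σ ≠ prependLast τ := fun σ τ h => by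
    simpa using DFunLike.congr_fun h (Fin.last (m + 1))
  have hcover : ∀ π ∉ Set.range (Sum.elim appendLast prependLast), connectedTerm X π = 0 := by
    intro π hπ
    refine if_neg fun hconn => hπ ?_
    rcases hconn.apply_last_eq_last_or_zero m.succ_pos with h | h
    · obtain ⟨σ, rfl⟩ := exists_appendLast_eq h
      exact ⟨.inl σ, rfl⟩
    · obtain ⟨σ, rfl⟩ := exists_prependLast_eq h
      exact ⟨.inr σ, rfl⟩
  rw [← Fintype.sum_of_injective _ (appendLast_injective.sumElim prependLast_injective hdisj) _ _
    hcover fun _ => rfl, Fintype.sum_sum_type]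
  simp only [Sum.elim_inl, Sum.elim_inr, connectedTerm_appendLast, connectedTerm_prependLast,
    sum_mul, mul_sum, sum_neg_distrib, sub_eq_add_neg]

lemma iteratedCommutator_concat {l : List R} (hl : l ≠ []) (a : R) :
    iteratedCommutator (l.concat a) = iteratedCommutator l * a - a * iteratedCommutator l := by
  obtain ⟨x, xs, rfl⟩ := List.exists_cons_of_ne_nil hl
  simp [iteratedCommutator, List.foldl_append]

theorem sum_connectedTerm (X : Fin (m + 1) → R) :
    ∑ π, connectedTerm X π = iteratedCommutator (List.ofFn X) := by
  induction m with
  | zero =>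
    have : IsConnectedPerm (1 : Perm (Fin 1)) :=
      (isConnectedPerm_iff_castSucc 1).2 fun l => l.elim0
    simp [connectedTerm, this, iteratedCommutator]
    rfl
  | succ m ih =>
    rw [sum_connectedTerm_succ, ih, List.ofFn_succ' X, iteratedCommutator_concat (by simp)]
    rfl

end Sums

/-- For elements `X₁,…,X_s` of an associative ring,
`Σ_{s₁=1}^{s} Σ_{π ∈ Φ_{s s₁}} (-1)^{s₁-1} X_{π⁻¹(1)} ⋯ X_{π⁻¹(s)}` equals the
left-normed iterated commutator `[⋯[[X₁,X₂],X₃],…,X_s]`; here `Φ_{s s₁}` is the set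
of connected permutations with `π(1) = s₁`. -/
theorem stmt14 (R : Type*) [Ring R] (s : ℕ) (hs : 0 < s) (X : Fin s → R) :
    (∑ π : Equiv.Perm (Fin s),
      if IsConnectedPerm π then
        ((-1 : R) ^ (π ⟨0, hs⟩ : ℕ)) * (List.ofFn fun i => X (π.symm i)).prod
      else 0) =
    iteratedCommutator (List.ofFn X) := by
  obtain ⟨m, rfl⟩ := Nat.exists_eq_succ_of_ne_zero hs.ne'
  exact sum_connectedTerm X
end

section
/- Let p be prime, q = p^{N*}, b* ∈ ℕ with r* = b*/(q−1) ∈ (v₀ − δ₀, v₀)·(1−1/q)^{-1} normalized so that condition C3 holds (r*(1 − p^{−N*}) ∈ (v₀ − δ₀, v₀)). Let ι ∈ 𝔄⁺(p) with ch(ι) = 1, i.e. ι = p^m(qα − (q−1)β) with β/r* having digit-sum 1 (so ι p^{−v_p(ι)} = qα − b* for the canonical presentation). Then ι p^{−v_p(ι)} ≥ q v₀ − b*. -/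
/-- Proposition 2.8 b) of the paper: if `ι ∈ 𝔄⁺(p)` has `ch(ι) = 1`, so that in the
canonical presentation `ι = p^m(qα - (q-1)β)` the digit sum of `β/r*` is `1` (forcing
`β = r*`, `(q-1)β = b*`, and `ι p^{-v_p(ι)} = qα - b*`), then
`ι p^{-v_p(ι)} ≥ q v₀ - b*`.  Here condition C3 (`r*(1-p^{-N*}) ∈ (v₀-δ₀, v₀)`) and
the defining property of `δ₀` are assumed. -/
theorem stmt17 (p Nstar q bstar : ℕ) (hp : p.Prime) (hNstar : 1 ≤ Nstar)
    (hq : q = p ^ Nstar) (hbstar : 0 < bstar) (hbp : ¬ p ∣ bstar)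
    (v₀ δ₀ : ℝ) (hv₀ : 0 < v₀) (hδ₀ : 0 < δ₀)
    (wstar rstar : ℝ) (hw : wstar = (p - 1 : ℝ) * v₀)
    (hr : rstar = (bstar : ℝ) / ((q : ℝ) - 1))
    (ustar : ℕ) (hustar : ustar = (p - 1) * (p - 2) + 1)
    (hδ : ∀ s : ℕ, 1 ≤ s → s < p → ∀ u : ℕ, u ≤ ustar → ∀ x ∈ Aset p u wstar,
      0 < v₀ - x / s → δ₀ ≤ v₀ - x / s)
    (hC3 : v₀ - δ₀ < rstar * (1 - (p : ℝ) ^ (-(Nstar : ℤ))) ∧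
      rstar * (1 - (p : ℝ) ^ (-(Nstar : ℤ))) < v₀)
    (m : ℕ) (α ι : ℝ) (hα : α ∈ AsetM p ustar wstar m)
    (hι : ι = (p : ℝ) ^ m * ((q : ℝ) * α - (bstar : ℝ)))
    (hιpos : 0 < ι) (hbound : |ι| ≤ (bstar : ℝ) * ((p : ℝ) - 1)) :
    (q : ℝ) * v₀ - (bstar : ℝ) ≤ (q : ℝ) * α - (bstar : ℝ) := by
  have hp2 : (2:ℕ) ≤ p := hp.two_le
  have hq2 : (2:ℕ) ≤ q := by
    calc (2:ℕ) ≤ p := hp2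
    _ = p ^ 1 := (pow_one p).symm
    _ ≤ p ^ Nstar := Nat.pow_le_pow_right (by omega) hNstar
    _ = q := hq.symm
  have hqR : (1:ℝ) < (q:ℝ) := by exact_mod_cast hq2
  have hqpos : (0:ℝ) < q := by linarith
  -- p^{-Nstar} = q⁻¹
  have hpinv : (p : ℝ) ^ (-(Nstar : ℤ)) = (q:ℝ)⁻¹ := by
    rw [zpow_neg, zpow_natCast, hq]
    push_cast
    ring
  have hkey : rstar * (1 - (p : ℝ) ^ (-(Nstar : ℤ))) = (bstar : ℝ) / q := by
    have h0 : (q:ℝ) ≠ 0 := ne_of_gt hqpos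
    have h1 : (q:ℝ) - 1 ≠ 0 := by linarith
    rw [hpinv, hr]
    field_simp
  have hC3' : v₀ - δ₀ < (bstar : ℝ) / q := by rw [← hkey]; exact hC3.1
  by_contra hcon
  push_neg at hcon
  have hαv : α < v₀ := by
    have := (mul_lt_mul_iff_right₀ hqpos).mp (by linarith : (q:ℝ) * α < (q:ℝ) * v₀)
    exact this
  have hαA : α ∈ Aset p ustar wstar := by
    obtain ⟨n, a, h1, h2, _, h4, h5⟩ := hα
    exact ⟨n, a, h1, h2, h4, h5⟩
  have hδα : δ₀ ≤ v₀ - α := by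
    have := hδ 1 le_rfl (by omega) ustar le_rfl α hαA
    simpa using this (by simpa using sub_pos.mpr hαv)
  -- hence q α ≤ q (v₀ - δ₀) < bstar, so ι ≤ 0
  have hqα : (q:ℝ) * α < (bstar : ℝ) := by
    have h1 : (q:ℝ) * α ≤ (q:ℝ) * (v₀ - δ₀) := by
      apply mul_le_mul_of_nonneg_left (by linarith) (le_of_lt hqpos)
    have h2 : (q:ℝ) * (v₀ - δ₀) < (bstar:ℝ) := by
      nlinarith [hC3', (lt_div_iff₀ hqpos).mp hC3']
    linarith
  have hpm : (0:ℝ) < (p:ℝ) ^ m := by positivity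
  have : ι ≤ 0 := by
    rw [hι]
    exact mul_nonpos_of_nonneg_of_nonpos (le_of_lt hpm) (by linarith)
  linarith
end
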